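/- arXiv:1106.1991 — 5 statements merged into one kernel-verified Lean document; each statement's English description precedes it below -/
import Mathlib

section
/- Let u be a smooth solution of Δu = F'(u) on ℝ² and let X be a Killing vector field of ℝ² (i.e. a linear combination with constant coefficients of ∂_x, ∂_y, and x∂_y − y∂_x). Then the vector field Ξ(X,u) := (½|∇u|² + F(u)) X − (X·∇u) ∇u is divergence-free on ℝ². -/
open Real

/-- Partial derivative in the first variable. -/
noncomputable def pdx (f : ℝ × ℝ → ℝ) (p : ℝ × ℝ) : ℝ := deriv (fun t => f (t, p.2)) p.1

/-- Partial derivative in the second variable. -/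
noncomputable def pdy (f : ℝ × ℝ → ℝ) (p : ℝ × ℝ) : ℝ := deriv (fun t => f (p.1, t)) p.2

/-- Laplacian. -/
noncomputable def lap (f : ℝ × ℝ → ℝ) (p : ℝ × ℝ) : ℝ := pdx (pdx f) p + pdy (pdy f) p

lemma sliceX {f : ℝ × ℝ → ℝ} (hf : ContDiff ℝ (⊤ : ℕ∞) f) (x y : ℝ) :
    HasDerivAt (fun t => f (t, y)) (pdx f (x, y)) x := by
  have h1 : HasDerivAt (fun t : ℝ => ((t, y) : ℝ × ℝ)) ((1:ℝ), (0:ℝ)) x :=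
    (hasDerivAt_id x).prodMk (hasDerivAt_const x y)
  have h2 := (hf.differentiable (by simp) (x, y)).hasFDerivAt.comp_hasDerivAt x h1
  have : pdx f (x, y) = fderiv ℝ f (x, y) (1, 0) := h2.deriv
  exact this ▸ h2

lemma sliceY {f : ℝ × ℝ → ℝ} (hf : ContDiff ℝ (⊤ : ℕ∞) f) (x y : ℝ) :
    HasDerivAt (fun t => f (x, t)) (pdy f (x, y)) y := by
  have h1 : HasDerivAt (fun t : ℝ => ((x, t) : ℝ × ℝ)) ((0:ℝ), (1:ℝ)) y :=
    (hasDerivAt_const y x).prodMk (hasDerivAt_id y)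
  have h2 := (hf.differentiable (by simp) (x, y)).hasFDerivAt.comp_hasDerivAt y h1
  have : pdy f (x, y) = fderiv ℝ f (x, y) (0, 1) := h2.deriv
  exact this ▸ h2

lemma pdx_eq {f : ℝ × ℝ → ℝ} (hf : ContDiff ℝ (⊤ : ℕ∞) f) (p : ℝ × ℝ) :
    pdx f p = fderiv ℝ f p (1, 0) := by
  have h1 : HasDerivAt (fun t : ℝ => ((t, p.2) : ℝ × ℝ)) ((1:ℝ), (0:ℝ)) p.1 :=
    (hasDerivAt_id p.1).prodMk (hasDerivAt_const p.1 p.2)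
  have h2 := (hf.differentiable (by simp) p).hasFDerivAt.comp_hasDerivAt p.1 h1
  exact h2.deriv

lemma pdy_eq {f : ℝ × ℝ → ℝ} (hf : ContDiff ℝ (⊤ : ℕ∞) f) (p : ℝ × ℝ) :
    pdy f p = fderiv ℝ f p (0, 1) := by
  have h1 : HasDerivAt (fun t : ℝ => ((p.1, t) : ℝ × ℝ)) ((0:ℝ), (1:ℝ)) p.2 :=
    (hasDerivAt_const p.2 p.1).prodMk (hasDerivAt_id p.2)
  have h2 := (hf.differentiable (by simp) p).hasFDerivAt.comp_hasDerivAt p.2 h1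
  exact h2.deriv

lemma contDiff_pdx {f : ℝ × ℝ → ℝ} (hf : ContDiff ℝ (⊤ : ℕ∞) f) : ContDiff ℝ (⊤ : ℕ∞) (pdx f) := by
  have h : ContDiff ℝ (⊤ : ℕ∞) (fun p : ℝ × ℝ => fderiv ℝ f p (1, 0)) :=
    (hf.fderiv_right (by simp)).clm_apply contDiff_const
  have e : pdx f = fun p : ℝ × ℝ => fderiv ℝ f p (1, 0) := funext (pdx_eq hf)
  rw [e]; exact h

lemma contDiff_pdy {f : ℝ × ℝ → ℝ} (hf : ContDiff ℝ (⊤ : ℕ∞) f) : ContDiff ℝ (⊤ : ℕ∞) (pdy f) := by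
  have h : ContDiff ℝ (⊤ : ℕ∞) (fun p : ℝ × ℝ => fderiv ℝ f p (0, 1)) :=
    (hf.fderiv_right (by simp)).clm_apply contDiff_const
  have e : pdy f = fun p : ℝ × ℝ => fderiv ℝ f p (0, 1) := funext (pdy_eq hf)
  rw [e]; exact h

lemma clairaut {f : ℝ × ℝ → ℝ} (hf : ContDiff ℝ (⊤ : ℕ∞) f) (p : ℝ × ℝ) :
    pdx (pdy f) p = pdy (pdx f) p := by
  have hf' : ∀ q : ℝ × ℝ, HasFDerivAt f (fderiv ℝ f q) q := fun q =>
    (hf.differentiable (by simp) q).hasFDerivAt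
  have hd2 : ContDiff ℝ (⊤ : ℕ∞) (fderiv ℝ f) := hf.fderiv_right (by simp)
  have hf'' : HasFDerivAt (fderiv ℝ f) (fderiv ℝ (fderiv ℝ f) p) p :=
    (hd2.differentiable (by simp) p).hasFDerivAt
  have hsymm := second_derivative_symmetric hf' hf'' ((1:ℝ), (0:ℝ)) ((0:ℝ), (1:ℝ))
  have h1 : pdx (pdy f) p = fderiv ℝ (fderiv ℝ f) p (1, 0) (0, 1) := by
    have hcomp : HasFDerivAt (fun q : ℝ × ℝ => fderiv ℝ f q ((0:ℝ), (1:ℝ)))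
        ((ContinuousLinearMap.apply ℝ ℝ ((0:ℝ), (1:ℝ))).comp (fderiv ℝ (fderiv ℝ f) p)) p :=
      (ContinuousLinearMap.apply ℝ ℝ ((0:ℝ), (1:ℝ))).hasFDerivAt.comp p hf''
    have e : pdy f = fun q : ℝ × ℝ => fderiv ℝ f q (0, 1) := funext (pdy_eq hf)
    rw [pdx_eq (contDiff_pdy hf) p, e, hcomp.fderiv]
    rfl
  have h2 : pdy (pdx f) p = fderiv ℝ (fderiv ℝ f) p (0, 1) (1, 0) := by
    have hcomp : HasFDerivAt (fun q : ℝ × ℝ => fderiv ℝ f q ((1:ℝ), (0:ℝ)))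
        ((ContinuousLinearMap.apply ℝ ℝ ((1:ℝ), (0:ℝ))).comp (fderiv ℝ (fderiv ℝ f) p)) p :=
      (ContinuousLinearMap.apply ℝ ℝ ((1:ℝ), (0:ℝ))).hasFDerivAt.comp p hf''
    have e : pdx f = fun q : ℝ × ℝ => fderiv ℝ f q (1, 0) := funext (pdx_eq hf)
    rw [pdy_eq (contDiff_pdx hf) p, e, hcomp.fderiv]
    rfl
  rw [h1, h2, hsymm]

/-- If `u` solves `Δu = F'(u)` on the plane and `X` is a Killing
vector field `X = (a - c y, b + c x)`, then the stress-energy field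
`Ξ(X,u) = (½|∇u|² + F(u)) X − X(u) ∇u` is divergence free. -/
theorem balancing_divergence_free
    (F : ℝ → ℝ) (hF : ContDiff ℝ (⊤ : ℕ∞) F)
    (u : ℝ × ℝ → ℝ) (hu : ContDiff ℝ (⊤ : ℕ∞) u)
    (hsol : ∀ p : ℝ × ℝ, lap u p = deriv F (u p))
    (a b c : ℝ)
    (X : ℝ × ℝ → ℝ × ℝ) (hX : ∀ p : ℝ × ℝ, X p = (a - c * p.2, b + c * p.1))
    (Xi1 Xi2 : ℝ × ℝ → ℝ)
    (hXi1 : ∀ p : ℝ × ℝ, Xi1 p =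
      ((1/2) * ((pdx u p) ^ 2 + (pdy u p) ^ 2) + F (u p)) * (X p).1
        - ((X p).1 * pdx u p + (X p).2 * pdy u p) * pdx u p)
    (hXi2 : ∀ p : ℝ × ℝ, Xi2 p =
      ((1/2) * ((pdx u p) ^ 2 + (pdy u p) ^ 2) + F (u p)) * (X p).2
        - ((X p).1 * pdx u p + (X p).2 * pdy u p) * pdy u p) :
    ∀ p : ℝ × ℝ, pdx Xi1 p + pdy Xi2 p = 0 := by
  rintro ⟨x, y⟩
  have hd1x := sliceX (contDiff_pdx hu) x y
  have hd2x := sliceX (contDiff_pdy hu) x y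
  have hdux := sliceX hu x y
  have hd1y := sliceY (contDiff_pdx hu) x y
  have hd2y := sliceY (contDiff_pdy hu) x y
  have hduy := sliceY hu x y
  have hF' : HasDerivAt F (deriv F (u (x, y))) (u (x, y)) :=
    (hF.differentiable (by simp) (u (x, y))).hasDerivAt
  have hFux : HasDerivAt (fun t => F (u (t, y)))
      (deriv F (u (x, y)) * pdx u (x, y)) x := hF'.comp x hdux
  have hFuy : HasDerivAt (fun t => F (u (x, t)))
      (deriv F (u (x, y)) * pdy u (x, y)) y := hF'.comp y hduy
  have e1 : (fun t => Xi1 (t, y)) = (fun t =>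
      ((1/2) * ((pdx u (t, y)) ^ 2 + (pdy u (t, y)) ^ 2) + F (u (t, y))) * (a - c * y)
        - ((a - c * y) * pdx u (t, y) + (b + c * t) * pdy u (t, y)) * pdx u (t, y)) := by
    funext t; rw [hXi1, hX]
  have e2 : (fun t => Xi2 (x, t)) = (fun t =>
      ((1/2) * ((pdx u (x, t)) ^ 2 + (pdy u (x, t)) ^ 2) + F (u (x, t))) * (b + c * x)
        - ((a - c * t) * pdx u (x, t) + (b + c * x) * pdy u (x, t)) * pdy u (x, t)) := by
    funext t; rw [hXi2, hX]
  have H1 := (((((hd1x.pow 2).add (hd2x.pow 2)).const_mul ((1:ℝ)/2)).add hFux).mul_const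
      (a - c * y)).sub
    (((hd1x.const_mul (a - c * y)).add
      ((((hasDerivAt_id x).const_mul c).const_add b).mul hd2x)).mul hd1x)
  have H2 := (((((hd1y.pow 2).add (hd2y.pow 2)).const_mul ((1:ℝ)/2)).add hFuy).mul_const
      (b + c * x)).sub
    ((((((hasDerivAt_id y).const_mul c).const_sub a).mul hd1y).add
      (hd2y.const_mul (b + c * x))).mul hd2y)
  simp only [id_eq, Pi.add_apply, Pi.mul_apply] at H1 H2
  have gx : pdx Xi1 (x, y) = deriv (fun t =>
      ((1/2) * ((pdx u (t, y)) ^ 2 + (pdy u (t, y)) ^ 2) + F (u (t, y))) * (a - c * y)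
        - ((a - c * y) * pdx u (t, y) + (b + c * t) * pdy u (t, y)) * pdx u (t, y)) x := by
    rw [show pdx Xi1 (x, y) = deriv (fun t => Xi1 (t, y)) x from rfl, e1]
  have gy : pdy Xi2 (x, y) = deriv (fun t =>
      ((1/2) * ((pdx u (x, t)) ^ 2 + (pdy u (x, t)) ^ 2) + F (u (x, t))) * (b + c * x)
        - ((a - c * t) * pdx u (x, t) + (b + c * x) * pdy u (x, t)) * pdy u (x, t)) y := by
    rw [show pdy Xi2 (x, y) = deriv (fun t => Xi2 (x, t)) y from rfl, e2]
  rw [gx, gy]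
  erw [H1.deriv, H2.deriv]
  have hlap := hsol (x, y)
  simp only [lap] at hlap
  have hcl := clairaut hu (x, y)
  rw [hcl]
  linear_combination (-((a - c * y) * pdx u (x, y) + (b + c * x) * pdy u (x, y))) * hlap
end

section
/- Suppose g : [T,∞) → ℝ is C¹, nonnegative, integrable on [T,∞), tends to 0 at infinity, and satisfies |g'(t)| ≤ C e^{−βt} ∫_t^∞ g(z) dz for all t ≥ T, where C, β > 0. Then g ≡ 0 on [T₀,∞) for T₀ sufficiently large. -/
open Real Filter MeasureTheory Set Topology

/-!
Write `G t = ∫_t^∞ g`, a nonincreasing function. For `T < t ≤ z` the hypothesis gives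
`|g'(z)| ≤ C G(t) e^{-βz}`, so integrating `g'` from `t` to `∞` (where `g` vanishes) yields
`g(t) ≤ (C/β) e^{-βt} G(t)`; integrating this bound once more gives
`G(t) ≤ (C/β²) e^{-βt} G(t)`. Once `(C/β²) e^{-βt} < 1` this forces `G(t) = 0`, hence `g(t) = 0`.
-/

lemma setIntegral_Ioi_le_of_le_mul_exp {f : ℝ → ℝ} {K β t : ℝ} (hβ : 0 < β)
    (hf : IntegrableOn f (Ioi t)) (hle : ∀ z ∈ Ioi t, f z ≤ K * exp (-β * z)) :
    ∫ z in Ioi t, f z ≤ K / β * exp (-β * t) :=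
  calc ∫ z in Ioi t, f z ≤ ∫ z in Ioi t, K * exp (-β * z) :=
        setIntegral_mono_on hf ((exp_neg_integrableOn_Ioi t hβ).const_mul K) measurableSet_Ioi hle
    _ = K / β * exp (-β * t) := by
        rw [integral_const_mul, integral_exp_mul_Ioi (neg_lt_zero.2 hβ)]
        field_simp

lemma abs_le_integral_abs_deriv_Ioi {g g' : ℝ → ℝ} {t : ℝ}
    (hcont : ContinuousWithinAt g (Ici t) t) (hderiv : ∀ x ∈ Ioi t, HasDerivAt g (g' x) x)
    (hg' : IntegrableOn g' (Ioi t)) (hlim : Tendsto g atTop (𝓝 0)) :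
    |g t| ≤ ∫ x in Ioi t, |g' x| := by
  have hftc : ∫ x in Ioi t, g' x = -g t := by
    rw [integral_Ioi_of_hasDerivAt_of_tendsto hcont hderiv hg' hlim, zero_sub]
  simpa [hftc] using abs_integral_le_integral_abs (μ := volume.restrict (Ioi t)) (f := g')

lemma antitoneOn_integral_Ici {g : ℝ → ℝ} {T : ℝ} (hpos : ∀ t ∈ Ici T, 0 ≤ g t)
    (hint : IntegrableOn g (Ici T)) : AntitoneOn (fun t => ∫ z in Ici t, g z) (Ici T) :=
  fun _ ht _ _ htz => setIntegral_mono_set (hint.mono_set (Ici_subset_Ici.2 ht))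
    ((ae_restrict_mem measurableSet_Ici).mono fun x hx => hpos x (Ici_subset_Ici.2 ht hx))
    (Eventually.of_forall (Ici_subset_Ici.2 htz))

section TailBounds

variable {C β T : ℝ} {g : ℝ → ℝ}

lemma abs_deriv_le_integral_Ici_mul_exp (hC : 0 ≤ C) (hpos : ∀ t ∈ Ici T, 0 ≤ g t)
    (hint : IntegrableOn g (Ici T))
    (hineq : ∀ t ∈ Ici T, |deriv g t| ≤ C * exp (-β * t) * ∫ z in Ici t, g z)
    {t z : ℝ} (ht : T ≤ t) (hz : t ≤ z) :
    |deriv g z| ≤ C * (∫ x in Ici t, g x) * exp (-β * z) :=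
  calc |deriv g z| ≤ C * exp (-β * z) * ∫ x in Ici z, g x := hineq z (ht.trans hz)
    _ ≤ C * exp (-β * z) * ∫ x in Ici t, g x :=
        mul_le_mul_of_nonneg_left (antitoneOn_integral_Ici hpos hint ht (ht.trans hz) hz)
          (by positivity)
    _ = C * (∫ x in Ici t, g x) * exp (-β * z) := by ring

lemma integrableOn_deriv_Ioi (hC : 0 ≤ C) (hβ : 0 < β) (hpos : ∀ t ∈ Ici T, 0 ≤ g t)
    (hint : IntegrableOn g (Ici T))
    (hineq : ∀ t ∈ Ici T, |deriv g t| ≤ C * exp (-β * t) * ∫ z in Ici t, g z)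
    {t : ℝ} (ht : T ≤ t) : IntegrableOn (deriv g) (Ioi t) :=
  ((exp_neg_integrableOn_Ioi t hβ).const_mul (C * ∫ x in Ici T, g x)).mono'
    (measurable_deriv g).aestronglyMeasurable.restrict
    ((ae_restrict_mem measurableSet_Ioi).mono fun _ hz =>
      abs_deriv_le_integral_Ici_mul_exp hC hpos hint hineq le_rfl (ht.trans hz.out.le))

lemma le_integral_Ici_mul_exp (hC : 0 ≤ C) (hβ : 0 < β)
    (hd : ∀ x ∈ Ioi T, DifferentiableAt ℝ g x) (hpos : ∀ t ∈ Ici T, 0 ≤ g t)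
    (hint : IntegrableOn g (Ici T)) (hlim : Tendsto g atTop (𝓝 0))
    (hineq : ∀ t ∈ Ici T, |deriv g t| ≤ C * exp (-β * t) * ∫ z in Ici t, g z)
    {t : ℝ} (ht : T < t) :
    g t ≤ C * (∫ x in Ici t, g x) / β * exp (-β * t) :=
  calc g t ≤ |g t| := le_abs_self _
    _ ≤ ∫ z in Ioi t, |deriv g z| :=
        abs_le_integral_abs_deriv_Ioi (hd t ht).continuousAt.continuousWithinAt
          (fun x hx => (hd x (ht.trans hx)).hasDerivAt)
          (integrableOn_deriv_Ioi hC hβ hpos hint hineq ht.le) hlim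
    _ ≤ C * (∫ x in Ici t, g x) / β * exp (-β * t) :=
        setIntegral_Ioi_le_of_le_mul_exp hβ
          (integrableOn_deriv_Ioi hC hβ hpos hint hineq ht.le).abs
          fun _ hz => abs_deriv_le_integral_Ici_mul_exp hC hpos hint hineq ht.le hz.out.le

lemma integral_Ici_le_mul_exp_mul_self (hC : 0 ≤ C) (hβ : 0 < β)
    (hd : ∀ x ∈ Ioi T, DifferentiableAt ℝ g x) (hpos : ∀ t ∈ Ici T, 0 ≤ g t)
    (hint : IntegrableOn g (Ici T)) (hlim : Tendsto g atTop (𝓝 0))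
    (hineq : ∀ t ∈ Ici T, |deriv g t| ≤ C * exp (-β * t) * ∫ z in Ici t, g z)
    {t : ℝ} (ht : T < t) :
    ∫ x in Ici t, g x ≤ C / β ^ 2 * exp (-β * t) * ∫ x in Ici t, g x := by
  set G := ∫ x in Ici t, g x
  calc G = ∫ z in Ioi t, g z := integral_Ici_eq_integral_Ioi
    _ ≤ C * G / β / β * exp (-β * t) := by
        refine setIntegral_Ioi_le_of_le_mul_exp hβ
          (hint.mono_set (Ioi_subset_Ici_self.trans (Ici_subset_Ici.2 ht.le))) fun z hz => ?_
        calc g z ≤ C * (∫ x in Ici z, g x) / β * exp (-β * z) :=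
              le_integral_Ici_mul_exp hC hβ hd hpos hint hlim hineq (ht.trans hz)
          _ ≤ C * G / β * exp (-β * z) := by
              have hGz := antitoneOn_integral_Ici hpos hint ht.le (ht.trans hz).le hz.out.le
              gcongr ?_ / _ * _
              exact mul_le_mul_of_nonneg_left hGz hC
    _ = C / β ^ 2 * exp (-β * t) * G := by ring

end TailBounds

/-- A nonnegative, integrable `C¹` function on `[T,∞)` tending to `0`
at infinity and satisfying `|g'(t)| ≤ C e^{-βt} ∫_t^∞ g` must vanish identically on
some half-line `[T₀, ∞)`. -/
theorem differential_inequality_forces_vanishing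
    (C β T : ℝ) (hC : 0 < C) (hβ : 0 < β)
    (g : ℝ → ℝ)
    (hg1 : ContDiffOn ℝ 1 g (Ici T))
    (hpos : ∀ t ∈ Ici T, 0 ≤ g t)
    (hint : IntegrableOn g (Ici T))
    (hlim : Tendsto g atTop (nhds 0))
    (hineq : ∀ t ∈ Ici T, |deriv g t| ≤ C * Real.exp (-β * t) * ∫ z in Ici t, g z) :
    ∃ T₀ : ℝ, ∀ t ∈ Ici T₀, g t = 0 := by
  have hd : ∀ x ∈ Ioi T, DifferentiableAt ℝ g x := fun x hx =>
    (hg1.differentiableOn one_ne_zero x hx.out.le).differentiableAt (Ici_mem_nhds hx)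
  have hsmall : ∀ᶠ t in atTop, C / β ^ 2 * exp (-β * t) < 1 :=
    ((tendsto_exp_atBot.comp (tendsto_id.const_mul_atTop_of_neg (neg_lt_zero.2 hβ))).const_mul
      (C / β ^ 2)).eventually (eventually_lt_nhds (by simp))
  have hvanish : ∀ᶠ t in atTop, g t = 0 := by
    filter_upwards [hsmall, eventually_gt_atTop T] with t hsmall ht
    have hG_nonneg : 0 ≤ ∫ x in Ici t, g x :=
      setIntegral_nonneg measurableSet_Ici fun x hx => hpos x (ht.le.trans hx)
    have hG : ∫ x in Ici t, g x = 0 := by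
      nlinarith [integral_Ici_le_mul_exp_mul_self hC.le hβ hd hpos hint hlim hineq ht]
    have hg := le_integral_Ici_mul_exp hC.le hβ hd hpos hint hlim hineq ht
    rw [hG, mul_zero, zero_div, zero_mul] at hg
    exact hg.antisymm (hpos t ht.le)
  obtain ⟨T₀, hT₀⟩ := eventually_atTop.1 hvanish
  exact ⟨T₀, hT₀⟩
end

section
/- Suppose Ω ⊂ ℝ² is open, ψ, φ are C², ψ > 0 on Ω, div(ψ²∇(φ/ψ)) = 0 on Ω, φ = 0 on ∂Ω, and φ is bounded on Ω with φ(x) → 0 as |x| → ∞ in Ω. If for each R ≥ 1 there is a cutoff ζ_R equal to 1 on B(0,R), supported in B(0,2R), with |∇ζ_R| ≤ C/R, then ∫_Ω |∇(φ/ψ)|² ψ² dx = 0, hence φ/ψ is locally constant on Ω. -/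
/-!
Write `h = φ / ψ`, let `ζ` be one of the cutoffs and let `χ_ε = levelCutoff ε`, a smooth
function vanishing for `|t| ≤ ε` and equal to `1` for `|t| ≥ 2ε`. Since `φ = 0` on `∂Ω`, the
field `χ_ε(φ)² ζ² h ψ² ∇h` is `C¹` with compact support inside `Ω`, so its divergence integrates
to zero. By `div(ψ² ∇h) = 0` and `h ψ² = φ ψ`, this divergence is `|a|² + 2a·b + 2a·c` with
`a = χ_ε(φ) ζ ψ ∇h`, `b = χ_ε(φ) φ ∇ζ` and `c = ζ χ_ε'(φ) φ ∇φ`, which gives the Caccioppoli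
inequality `∫ |a|² ≤ 8 ∫ |b|² + 8 ∫ |c|²`.

Because `∇ζ` lives on `R ≤ |x| ≤ 2R`, the `b`-term is at most `16 C² sup_{|x| ≥ R} φ²`: in the
plane the area `16 R²` of the square containing the annulus is exactly compensated by
`|∇ζ|² ≤ C² / R²`, so this term tends to `0` as `R → ∞`. With `ζ` fixed, the `c`-term tends to
`0` as `ε → 0` by dominated convergence, since `t χ_ε'(t)` is bounded uniformly in `ε` and
vanishes unless `ε < |t| ≤ 2ε`, while `∇φ` is bounded on bounded parts of `Ω` because `φ` is
`C¹` up to the boundary. Hence `ψ² |∇h|²` vanishes wherever `φ ≠ 0`; at any other point of `Ω`,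
`∇h` is either a limit of such values or `h` vanishes nearby.
-/

open MeasureTheory Set

open Filter Topology

section PartialDerivatives

variable {f g : ℝ × ℝ → ℝ} {p : ℝ × ℝ}

lemma hasDerivAt_pdx (hf : DifferentiableAt ℝ f p) :
    HasDerivAt (fun t => f (t, p.2)) (pdx f p) p.1 :=
  (hf.comp p.1 (by fun_prop : DifferentiableAt ℝ (fun t : ℝ => (t, p.2)) p.1)).hasDerivAt

lemma hasDerivAt_pdy (hf : DifferentiableAt ℝ f p) :
    HasDerivAt (fun t => f (p.1, t)) (pdy f p) p.2 :=
  (hf.comp p.2 (by fun_prop : DifferentiableAt ℝ (fun t : ℝ => (p.1, t)) p.2)).hasDerivAt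

lemma pdx_eq_fderiv (hf : DifferentiableAt ℝ f p) : pdx f p = fderiv ℝ f p (1, 0) :=
  (hf.hasFDerivAt.comp_hasDerivAt p.1
    ((hasDerivAt_id p.1).prodMk (hasDerivAt_const p.1 p.2))).deriv

lemma pdy_eq_fderiv (hf : DifferentiableAt ℝ f p) : pdy f p = fderiv ℝ f p (0, 1) :=
  (hf.hasFDerivAt.comp_hasDerivAt p.2
    ((hasDerivAt_const p.2 p.1).prodMk (hasDerivAt_id p.2))).deriv

lemma abs_pdx_le_norm_fderiv (hf : DifferentiableAt ℝ f p) : |pdx f p| ≤ ‖fderiv ℝ f p‖ := by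
  simpa [pdx_eq_fderiv hf] using (fderiv ℝ f p).le_opNorm (1, 0)

lemma abs_pdy_le_norm_fderiv (hf : DifferentiableAt ℝ f p) : |pdy f p| ≤ ‖fderiv ℝ f p‖ := by
  simpa [pdy_eq_fderiv hf] using (fderiv ℝ f p).le_opNorm (0, 1)

lemma Filter.EventuallyEq.pdx_eq (hfg : f =ᶠ[𝓝 p] g) : pdx f p = pdx g p :=
  (hfg.comp_tendsto (by fun_prop : Continuous fun t : ℝ => (t, p.2)).continuousAt).deriv_eq

lemma Filter.EventuallyEq.pdy_eq (hfg : f =ᶠ[𝓝 p] g) : pdy f p = pdy g p :=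
  (hfg.comp_tendsto (by fun_prop : Continuous fun t : ℝ => (p.1, t)).continuousAt).deriv_eq

lemma pdx_eq_zero_of_eventuallyEq_const {c : ℝ} (hf : f =ᶠ[𝓝 p] fun _ => c) : pdx f p = 0 := by
  rw [hf.pdx_eq]
  simp [pdx]

lemma pdy_eq_zero_of_eventuallyEq_const {c : ℝ} (hf : f =ᶠ[𝓝 p] fun _ => c) : pdy f p = 0 := by
  rw [hf.pdy_eq]
  simp [pdy]

lemma pdx_of_notMem_tsupport (hp : p ∉ tsupport f) : pdx f p = 0 :=
  pdx_eq_zero_of_eventuallyEq_const (notMem_tsupport_iff_eventuallyEq.1 hp)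

lemma pdy_of_notMem_tsupport (hp : p ∉ tsupport f) : pdy f p = 0 :=
  pdy_eq_zero_of_eventuallyEq_const (notMem_tsupport_iff_eventuallyEq.1 hp)

lemma HasCompactSupport.pdx (hf : HasCompactSupport f) : HasCompactSupport (pdx f) :=
  hf.mono' fun _ hp => by_contra fun h => hp (pdx_of_notMem_tsupport h)

lemma HasCompactSupport.pdy (hf : HasCompactSupport f) : HasCompactSupport (pdy f) :=
  hf.mono' fun _ hp => by_contra fun h => hp (pdy_of_notMem_tsupport h)

lemma ContDiffAt.pdx {m n : WithTop ℕ∞} (hf : ContDiffAt ℝ n f p) (hmn : m + 1 ≤ n) :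
    ContDiffAt ℝ m (pdx f) p := by
  have hd : ∀ᶠ q in 𝓝 p, DifferentiableAt ℝ f q :=
    ((hf.of_le (le_add_self.trans hmn)).eventually (by simp)).mono fun q hq =>
      hq.differentiableAt one_ne_zero
  exact ((hf.fderiv_right hmn).clm_apply (contDiffAt_const (c := ((1 : ℝ), (0 : ℝ)))))
    |>.congr_of_eventuallyEq (hd.mono fun q hq => pdx_eq_fderiv hq)

lemma ContDiffAt.pdy {m n : WithTop ℕ∞} (hf : ContDiffAt ℝ n f p) (hmn : m + 1 ≤ n) :
    ContDiffAt ℝ m (pdy f) p := by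
  have hd : ∀ᶠ q in 𝓝 p, DifferentiableAt ℝ f q :=
    ((hf.of_le (le_add_self.trans hmn)).eventually (by simp)).mono fun q hq =>
      hq.differentiableAt one_ne_zero
  exact ((hf.fderiv_right hmn).clm_apply (contDiffAt_const (c := ((0 : ℝ), (1 : ℝ)))))
    |>.congr_of_eventuallyEq (hd.mono fun q hq => pdy_eq_fderiv hq)

lemma ContDiff.continuous_pdx (hf : ContDiff ℝ 1 f) : Continuous (pdx f) :=
  continuous_iff_continuousAt.2 fun _ => (hf.contDiffAt.pdx (m := 0) (by simp)).continuousAt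

lemma ContDiff.continuous_pdy (hf : ContDiff ℝ 1 f) : Continuous (pdy f) :=
  continuous_iff_continuousAt.2 fun _ => (hf.contDiffAt.pdy (m := 0) (by simp)).continuousAt

lemma pdx_eq_zero_of_eventually_ne_zero_imp (hc : ContinuousAt (pdx f) p)
    (h : ∀ᶠ x in 𝓝 p, f x ≠ 0 → pdx f x = 0) : pdx f p = 0 := by
  by_cases hfreq : ∃ᶠ x in 𝓝 p, f x ≠ 0
  · exact tendsto_nhds_unique_of_frequently_eq hc tendsto_const_nhds
      ((hfreq.and_eventually h).mono fun x hx => hx.2 hx.1)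
  · exact pdx_eq_zero_of_eventuallyEq_const (c := 0) (by simpa [EventuallyEq] using hfreq)

lemma pdy_eq_zero_of_eventually_ne_zero_imp (hc : ContinuousAt (pdy f) p)
    (h : ∀ᶠ x in 𝓝 p, f x ≠ 0 → pdy f x = 0) : pdy f p = 0 := by
  by_cases hfreq : ∃ᶠ x in 𝓝 p, f x ≠ 0
  · exact tendsto_nhds_unique_of_frequently_eq hc tendsto_const_nhds
      ((hfreq.and_eventually h).mono fun x hx => hx.2 hx.1)
  · exact pdy_eq_zero_of_eventuallyEq_const (c := 0) (by simpa [EventuallyEq] using hfreq)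

lemma integral_fderiv_apply_eq_zero {E : Type*} [NormedAddCommGroup E] [NormedSpace ℝ E]
    [FiniteDimensional ℝ E] [MeasurableSpace E] [BorelSpace E] {μ : Measure E}
    [μ.IsAddHaarMeasure] {f : E → ℝ} (hf : ContDiff ℝ 1 f) (hs : HasCompactSupport f) (v : E) :
    ∫ x, fderiv ℝ f x v ∂μ = 0 := by
  have hf' : Continuous fun x => fderiv ℝ f x v :=
    (hf.continuous_fderiv one_ne_zero).clm_apply continuous_const
  have key := integral_bilinear_hasLineDerivAt_right_eq_neg_left_of_integrable
    (μ := μ) (B := ContinuousLinearMap.mul ℝ ℝ) (f := f) (f' := fun x => fderiv ℝ f x v)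
    (g := fun _ => 1) (g' := fun _ => 0) (v := v)
    (by simpa using hf'.integrable_of_hasCompactSupport (hs.fderiv_apply (𝕜 := ℝ) v))
    (by simp) (by simpa using hf.continuous.integrable_of_hasCompactSupport hs)
    (fun x _ => ((hf.differentiable one_ne_zero) x).hasFDerivAt.hasLineDerivAt v)
    (fun x _ => by simpa using (hasFDerivAt_const (1 : ℝ) x).hasLineDerivAt v)
  simpa using key.symm

lemma integral_pdx_eq_zero (hf : ContDiff ℝ 1 f) (hs : HasCompactSupport f) :
    ∫ p, pdx f p = 0 := by
  simpa [pdx_eq_fderiv ((hf.differentiable one_ne_zero) _)] using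
    integral_fderiv_apply_eq_zero (μ := volume) hf hs (1, 0)

lemma integral_pdy_eq_zero (hf : ContDiff ℝ 1 f) (hs : HasCompactSupport f) :
    ∫ p, pdy f p = 0 := by
  simpa [pdy_eq_fderiv ((hf.differentiable one_ne_zero) _)] using
    integral_fderiv_apply_eq_zero (μ := volume) hf hs (0, 1)

lemma setIntegral_pdx_add_pdy_eq_zero {Ω : Set (ℝ × ℝ)} (h₁ : ContDiff ℝ 1 f)
    (h₂ : ContDiff ℝ 1 g) (hc₁ : HasCompactSupport f) (hc₂ : HasCompactSupport g)
    (hs₁ : tsupport f ⊆ Ω) (hs₂ : tsupport g ⊆ Ω) :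
    IntegrableOn (fun x => pdx f x + pdy g x) Ω ∧ ∫ x in Ω, (pdx f x + pdy g x) = 0 := by
  have hi₁ : Integrable (pdx f) := h₁.continuous_pdx.integrable_of_hasCompactSupport hc₁.pdx
  have hi₂ : Integrable (pdy g) := h₂.continuous_pdy.integrable_of_hasCompactSupport hc₂.pdy
  refine ⟨(hi₁.add hi₂).integrableOn, ?_⟩
  rw [setIntegral_eq_integral_of_forall_compl_eq_zero fun x hx => ?_, integral_add hi₁ hi₂,
    integral_pdx_eq_zero h₁ hc₁, integral_pdy_eq_zero h₂ hc₂, add_zero]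
  rw [pdx_of_notMem_tsupport fun h => hx (hs₁ h), pdy_of_notMem_tsupport fun h => hx (hs₂ h),
    add_zero]

end PartialDerivatives

lemma ContDiffOn.contDiff_of_tsupport_subset {E F : Type*} [NormedAddCommGroup E]
    [NormedSpace ℝ E] [NormedAddCommGroup F] [NormedSpace ℝ F] {f : E → F} {s : Set E}
    {n : WithTop ℕ∞} (hf : ContDiffOn ℝ n f s) (hs : IsOpen s) (hsupp : tsupport f ⊆ s) :
    ContDiff ℝ n f := by
  refine contDiff_iff_contDiffAt.2 fun x => ?_
  by_cases hx : x ∈ s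
  · exact hf.contDiffAt (hs.mem_nhds hx)
  · exact contDiffAt_const.congr_of_eventuallyEq
      (notMem_tsupport_iff_eventuallyEq.1 fun h => hx (hsupp h))

lemma exists_norm_fderiv_le_of_contDiffOn_closure {E F : Type*} [NormedAddCommGroup E]
    [NormedSpace ℝ E] [NormedAddCommGroup F] [NormedSpace ℝ F] {f : E → F} {s K : Set E}
    (hs : IsOpen s) (hf : ContDiffOn ℝ 1 f (closure s)) (hK : IsCompact K) :
    ∃ M, ∀ x ∈ s ∩ K, ‖fderiv ℝ f x‖ ≤ M := by
  refine hK.induction_on (p := fun t => ∃ M, ∀ x ∈ s ∩ t, ‖fderiv ℝ f x‖ ≤ M)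
    ⟨0, by simp⟩ (fun t t' htt' ⟨M, hM⟩ => ⟨M, fun x hx => hM x ⟨hx.1, htt' hx.2⟩⟩)
    (fun t t' ⟨M, hM⟩ ⟨M', hM'⟩ => ⟨max M M', fun x ⟨hxs, hxt⟩ => hxt.elim
      (fun h => (hM x ⟨hxs, h⟩).trans (le_max_left _ _))
      (fun h => (hM' x ⟨hxs, h⟩).trans (le_max_right _ _))⟩) fun x _ => ?_
  by_cases hx : x ∈ closure s
  swap
  · exact ⟨(closure s)ᶜ, mem_nhdsWithin_of_mem_nhds (isClosed_closure.isOpen_compl.mem_nhds hx),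
      0, fun y hy => absurd (subset_closure hy.1) hy.2⟩
  obtain ⟨u, hu, -, f', hf'u, hf'c⟩ := (contDiffWithinAt_succ_iff_hasFDerivWithinAt
    (n := 0) (by simp)).1 (by simpa using hf x hx)
  rw [insert_eq_of_mem hx] at hu
  obtain ⟨w, hw, hxw, hwu⟩ := mem_nhdsWithin.1 hu
  have hbound : ∀ᶠ y in 𝓝 x, y ∈ u → ‖f' y‖ < ‖f' x‖ + 1 :=
    eventually_nhdsWithin_iff.1 <| hf'c.continuousWithinAt.norm.eventually
      (gt_mem_nhds (lt_add_one _))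
  refine ⟨_, mem_nhdsWithin_of_mem_nhds (Eventually.and (hw.mem_nhds hxw) hbound),
    ‖f' x‖ + 1, ?_⟩
  rintro y ⟨hys, hyw, hy⟩
  have hyu : u ∈ 𝓝 y := mem_of_superset ((hw.inter hs).mem_nhds ⟨hyw, hys⟩)
    fun z hz => hwu ⟨hz.1, subset_closure hz.2⟩
  rw [((hf'u y (mem_of_mem_nhds hyu)).hasFDerivAt hyu).fderiv]
  exact (hy (mem_of_mem_nhds hyu)).le

lemma mul_measureReal_le_setIntegral {X : Type*} [MeasurableSpace X] {μ : Measure X}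
    {f : X → ℝ} {s t : Set X} {m : ℝ} (hs : MeasurableSet s) (ht : MeasurableSet t)
    (hμt : μ t ≠ ⊤) (hts : t ⊆ s) (hf : IntegrableOn f s μ) (hf0 : ∀ x ∈ s, 0 ≤ f x)
    (hm : ∀ x ∈ t, m ≤ f x) : m * μ.real t ≤ ∫ x in s, f x ∂μ :=
  (setIntegral_ge_of_const_le_real ht hμt hm (hf.mono_set hts)).trans
    (setIntegral_mono_set hf ((ae_restrict_iff' hs).2 (Eventually.of_forall hf0))
      (Eventually.of_forall hts))

lemma norm_le_sqrt_sq_add_sq (p : ℝ × ℝ) : ‖p‖ ≤ √(p.1 ^ 2 + p.2 ^ 2) :=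
  max_le (Real.abs_le_sqrt (by nlinarith)) (Real.abs_le_sqrt (by nlinarith))

lemma sqrt_sq_add_sq_le_two_mul_norm (p : ℝ × ℝ) : √(p.1 ^ 2 + p.2 ^ 2) ≤ 2 * ‖p‖ := by
  have h1 := sq_le_sq' (abs_le.1 (norm_fst_le p)).1 (abs_le.1 (norm_fst_le p)).2
  have h2 := sq_le_sq' (abs_le.1 (norm_snd_le p)).1 (abs_le.1 (norm_snd_le p)).2
  exact Real.sqrt_le_iff.2 ⟨by positivity, by nlinarith⟩

lemma volume_real_closedBall_zero (r : ℝ) (hr : 0 ≤ r) :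
    volume.real (Metric.closedBall (0 : ℝ × ℝ) r) = (2 * r) ^ 2 := by
  rw [measureReal_def, show (0 : ℝ × ℝ) = (0, 0) from rfl, ← closedBall_prod_same,
    Measure.volume_eq_prod, Measure.prod_prod, Real.volume_closedBall, ENNReal.toReal_mul,
    ENNReal.toReal_ofReal (by positivity)]
  ring

section SupportInside

variable {X : Type*} [TopologicalSpace X] {Ω : Set X} {φ : X → ℝ} {κ : ℝ → ℝ}

lemma tsupport_indicator_comp_mul_subset (hφ : ContinuousOn φ (closure Ω))
    (hbd : ∀ p ∈ frontier Ω, φ p = 0) (hκ : κ =ᶠ[𝓝 0] 0) (G : X → ℝ) :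
    tsupport (Ω.indicator fun x => κ (φ x) * G x) ⊆ Ω := by
  intro p hp
  by_contra hpΩ
  refine notMem_tsupport_iff_eventuallyEq.2 ?_ hp
  have hvanish : ∀ᶠ x in 𝓝 p, x ∈ Ω → κ (φ x) = 0 := by
    by_cases hpc : p ∈ closure Ω
    · have hφp : φ p = 0 := hbd p ⟨hpc, fun h => hpΩ (interior_subset h)⟩
      have := (hφ p hpc).tendsto.eventually (hφp ▸ hκ)
      exact (eventually_nhdsWithin_iff.1 this).mono fun x hx hxΩ => hx (subset_closure hxΩ)
    · exact (isClosed_closure.isOpen_compl.eventually_mem hpc).mono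
        fun x hx hxΩ => absurd (subset_closure hxΩ) hx
  exact hvanish.mono fun x hx => by by_cases hxΩ : x ∈ Ω <;> simp [hxΩ, hx]

lemma integrableOn_comp_mul_of_frontier [MeasurableSpace X] [OpensMeasurableSpace X]
    {μ : Measure X} [IsFiniteMeasureOnCompacts μ] {G : X → ℝ} (hΩ : IsOpen Ω)
    (hφ : ContinuousOn φ (closure Ω)) (hbd : ∀ p ∈ frontier Ω, φ p = 0) (hκ : κ =ᶠ[𝓝 0] 0)
    (hcont : ContinuousOn (fun x => κ (φ x) * G x) Ω) (hG : HasCompactSupport G) :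
    IntegrableOn (fun x => κ (φ x) * G x) Ω μ := by
  rw [← integrable_indicator_iff hΩ.measurableSet]
  refine Continuous.integrable_of_hasCompactSupport ?_ (hG.mono fun x hx => ?_)
  · exact (hcont.congr fun x hx => indicator_of_mem hx _).continuous_of_tsupport_subset hΩ
      (tsupport_indicator_comp_mul_subset hφ hbd hκ G)
  · exact fun hGx => hx (by simp [hGx])

end SupportInside

lemma contDiff_indicator_comp_mul_of_frontier {E : Type*} [NormedAddCommGroup E]
    [NormedSpace ℝ E] {Ω : Set E} {φ : E → ℝ} {κ : ℝ → ℝ} {G : E → ℝ} {n : WithTop ℕ∞}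
    (hΩ : IsOpen Ω) (hφ : ContinuousOn φ (closure Ω)) (hbd : ∀ p ∈ frontier Ω, φ p = 0)
    (hκ : κ =ᶠ[𝓝 0] 0) (hcd : ContDiffOn ℝ n (fun x => κ (φ x) * G x) Ω) :
    ContDiff ℝ n (Ω.indicator fun x => κ (φ x) * G x) :=
  (hcd.congr fun _ hx => indicator_of_mem hx _).contDiff_of_tsupport_subset hΩ
    (tsupport_indicator_comp_mul_subset hφ hbd hκ G)

section LevelCutoff

noncomputable def unitBump : ContDiffBump (0 : ℝ) := ⟨1, 2, one_pos, one_lt_two⟩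

noncomputable def levelCutoff (ε t : ℝ) : ℝ := 1 - unitBump (t / ε)

variable {ε t : ℝ}

lemma contDiff_levelCutoff {n : ℕ∞} : ContDiff ℝ n (levelCutoff ε) :=
  contDiff_const.sub (unitBump.contDiff.comp (contDiff_id.div_const ε))

lemma levelCutoff_eventuallyEq_zero (hε : 0 < ε) : levelCutoff ε =ᶠ[𝓝 0] 0 := by
  filter_upwards [Ioo_mem_nhds (neg_lt_zero.2 hε) hε] with t ht
  have : t / ε ∈ Metric.closedBall (0 : ℝ) unitBump.rIn := by
    simpa [unitBump, abs_div, abs_of_pos hε, div_le_one hε, abs_le] using ⟨ht.1.le, ht.2.le⟩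
  simp [levelCutoff, unitBump.one_of_mem_closedBall this]

lemma levelCutoff_of_le (hε : 0 < ε) (ht : 2 * ε ≤ |t|) : levelCutoff ε t = 1 := by
  have : unitBump.rOut ≤ dist (t / ε) 0 := by
    simpa [unitBump, abs_div, abs_of_pos hε, le_div_iff₀ hε] using ht
  simp [levelCutoff, unitBump.zero_of_le_dist this]

lemma levelCutoff_sq_le_one : levelCutoff ε t ^ 2 ≤ 1 := by
  have h0 := unitBump.nonneg (x := t / ε)
  have h1 := unitBump.le_one (x := t / ε)
  unfold levelCutoff
  nlinarith

lemma deriv_levelCutoff_mul_self :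
    deriv (levelCutoff ε) t * t = -(deriv unitBump (t / ε) * (t / ε)) := by
  have hdiv : HasDerivAt (fun s => s / ε) (1 / ε) t := (hasDerivAt_id' t).div_const ε
  have hbump : HasDerivAt (unitBump ∘ fun s => s / ε) (deriv unitBump (t / ε) * (1 / ε)) t :=
    HasDerivAt.comp (h₂ := unitBump) t
      (unitBump.contDiff.differentiable one_ne_zero (t / ε)).hasDerivAt hdiv
  have hd : HasDerivAt (levelCutoff ε) (-(deriv unitBump (t / ε) * (1 / ε))) t :=
    hbump.const_sub 1
  rw [hd.deriv]
  ring

lemma exists_abs_deriv_levelCutoff_mul_self_le :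
    ∃ c, ∀ ε t, |deriv (levelCutoff ε) t * t| ≤ c := by
  have hcont : Continuous fun s => deriv unitBump s * s :=
    (unitBump.contDiff.continuous_deriv le_rfl).mul continuous_id
  obtain ⟨c, hc⟩ := hcont.bounded_above_of_compact_support
    (unitBump.hasCompactSupport.deriv.mul_right)
  exact ⟨c, fun ε t => by simpa [deriv_levelCutoff_mul_self, abs_div] using hc (t / ε)⟩

lemma deriv_levelCutoff_of_lt (hε : 0 < ε) (ht : 2 * ε < |t|) :
    deriv (levelCutoff ε) t = 0 := by
  have hout : t / ε ∉ tsupport unitBump := by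
    rw [unitBump.tsupport_eq, Metric.mem_closedBall, Real.dist_eq, sub_zero, abs_div,
      abs_of_pos hε, div_le_iff₀ hε]
    exact fun h => absurd ht (not_lt.2 (by simpa [unitBump, mul_comm] using h))
  have hzero : deriv unitBump (t / ε) = 0 := by
    by_contra h
    exact hout (support_deriv_subset h)
  have hd := deriv_levelCutoff_mul_self (ε := ε) (t := t)
  rw [hzero, zero_mul, neg_zero] at hd
  rcases mul_eq_zero.1 hd with h | h
  · exact h
  · rw [h, abs_zero] at ht
    linarith

lemma tendsto_deriv_levelCutoff_mul_self (t : ℝ) :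
    Tendsto (fun ε => deriv (levelCutoff ε) t * t) (𝓝[>] 0) (𝓝 0) := by
  rcases eq_or_ne t 0 with rfl | ht
  · simp
  refine tendsto_const_nhds.congr' ?_
  filter_upwards [Ioo_mem_nhdsGT (half_pos (abs_pos.2 ht))] with ε hε
  rw [deriv_levelCutoff_of_lt hε.1 (by linarith [hε.2]), zero_mul]

end LevelCutoff

lemma sq_add_sq_le_of_eq {a₁ a₂ b₁ b₂ c₁ c₂ D : ℝ}
    (hD : D = a₁ ^ 2 + a₂ ^ 2 + 2 * (a₁ * b₁ + a₂ * b₂) + 2 * (a₁ * c₁ + a₂ * c₂)) :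
    a₁ ^ 2 + a₂ ^ 2 ≤ 2 * D + 8 * (b₁ ^ 2 + b₂ ^ 2) + 8 * (c₁ ^ 2 + c₂ ^ 2) := by
  -- `2D + 8|b|² + 8|c|² - |a|² = |a + 2b + 2c|² + 4|b - c|²`
  nlinarith [sq_nonneg (a₁ + 2 * b₁ + 2 * c₁), sq_nonneg (a₂ + 2 * b₂ + 2 * c₂),
    sq_nonneg (b₁ - c₁), sq_nonneg (b₂ - c₂)]

lemma caccioppoli_pointwise {φ ψ ζ : ℝ × ℝ → ℝ} {χ : ℝ → ℝ} {q : ℝ × ℝ}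
    (hχ : Differentiable ℝ χ) (hζ : Differentiable ℝ ζ) (hφ : ContDiffAt ℝ 2 φ q)
    (hψ : ContDiffAt ℝ 2 ψ q) (hψq : ψ q ≠ 0)
    (hdiv : pdx (fun x => ψ x ^ 2 * pdx (φ / ψ) x) q
      + pdy (fun x => ψ x ^ 2 * pdy (φ / ψ) x) q = 0) :
    χ (φ q) ^ 2 * (ζ q ^ 2 * ψ q ^ 2 * (pdx (φ / ψ) q ^ 2 + pdy (φ / ψ) q ^ 2)) ≤
      2 * (pdx (fun x => χ (φ x) ^ 2 * (ζ x ^ 2 * (φ / ψ) x * (ψ x ^ 2 * pdx (φ / ψ) x))) q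
        + pdy (fun x => χ (φ x) ^ 2 * (ζ x ^ 2 * (φ / ψ) x * (ψ x ^ 2 * pdy (φ / ψ) x))) q)
      + 8 * (χ (φ q) ^ 2 * φ q ^ 2 * (pdx ζ q ^ 2 + pdy ζ q ^ 2))
      + 8 * ((deriv χ (φ q) * φ q) ^ 2 * (ζ q ^ 2 * (pdx φ q ^ 2 + pdy φ q ^ 2))) := by
  set h := φ / ψ
  have hh : ContDiffAt ℝ 2 h q := hφ.div hψ hψq
  have hφd := hφ.differentiableAt two_ne_zero
  have hψd := hψ.differentiableAt two_ne_zero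
  have hhd := hh.differentiableAt two_ne_zero
  have hud := (hh.pdx (m := 1) (by norm_num)).differentiableAt one_ne_zero
  have hvd := (hh.pdy (m := 1) (by norm_num)).differentiableAt one_ne_zero
  have hx : pdx (fun x => χ (φ x) ^ 2 * (ζ x ^ 2 * h x * (ψ x ^ 2 * pdx h x))) q = _ :=
    ((((hχ _).hasDerivAt.comp q.1 (hasDerivAt_pdx hφd)).pow 2).mul
      ((((hasDerivAt_pdx (hζ q)).pow 2).mul (hasDerivAt_pdx hhd)).mul
      (hasDerivAt_pdx (f := fun x => ψ x ^ 2 * pdx h x) ((hψd.pow 2).mul hud)))).deriv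
  have hy : pdy (fun x => χ (φ x) ^ 2 * (ζ x ^ 2 * h x * (ψ x ^ 2 * pdy h x))) q = _ :=
    ((((hχ _).hasDerivAt.comp q.2 (hasDerivAt_pdy hφd)).pow 2).mul
      ((((hasDerivAt_pdy (hζ q)).pow 2).mul (hasDerivAt_pdy hhd)).mul
      (hasDerivAt_pdy (f := fun x => ψ x ^ 2 * pdy h x) ((hψd.pow 2).mul hvd)))).deriv
  have hrel : h q * ψ q = φ q := div_mul_cancel₀ (φ q) hψq
  set u := pdx h q
  set v := pdy h q
  have key := sq_add_sq_le_of_eq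
    (a₁ := χ (φ q) * ζ q * ψ q * u) (a₂ := χ (φ q) * ζ q * ψ q * v)
    (b₁ := χ (φ q) * φ q * pdx ζ q) (b₂ := χ (φ q) * φ q * pdy ζ q)
    (c₁ := ζ q * (deriv χ (φ q) * φ q) * pdx φ q)
    (c₂ := ζ q * (deriv χ (φ q) * φ q) * pdy φ q)
    (D := pdx (fun x => χ (φ x) ^ 2 * (ζ x ^ 2 * h x * (ψ x ^ 2 * pdx h x))) q
      + pdy (fun x => χ (φ x) ^ 2 * (ζ x ^ 2 * h x * (ψ x ^ 2 * pdy h x))) q) (by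
    rw [hx, hy]
    norm_num
    linear_combination (χ (φ q) ^ 2 * ζ q ^ 2 * h q) * hdiv
      + (2 * χ (φ q) * deriv χ (φ q) * ζ q ^ 2 * (pdx φ q * u + pdy φ q * v)
        + 2 * χ (φ q) ^ 2 * ζ q * (pdx ζ q * u + pdy ζ q * v)) * ψ q * hrel)
  linear_combination key
theorem integrableOn_caccioppoli_terms {Ω : Set (ℝ × ℝ)} {φ ψ ζ : ℝ × ℝ → ℝ} {χ : ℝ → ℝ}
    (hΩ : IsOpen Ω) (hφ : ContDiffOn ℝ 2 φ Ω) (hφc : ContinuousOn φ (closure Ω))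
    (hψ : ContDiffOn ℝ 2 ψ Ω) (hψ0 : ∀ p ∈ Ω, ψ p ≠ 0) (hbd : ∀ p ∈ frontier Ω, φ p = 0)
    (hχ : ContDiff ℝ 1 χ) (hχ0 : χ =ᶠ[𝓝 0] 0) (hζ : ContDiff ℝ 1 ζ)
    (hζc : HasCompactSupport ζ) :
    IntegrableOn
      (fun x => χ (φ x) ^ 2 * (ζ x ^ 2 * ψ x ^ 2 * (pdx (φ / ψ) x ^ 2 + pdy (φ / ψ) x ^ 2))) Ω ∧
    IntegrableOn (fun x => χ (φ x) ^ 2 * φ x ^ 2 * (pdx ζ x ^ 2 + pdy ζ x ^ 2)) Ω ∧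
    IntegrableOn
      (fun x => (deriv χ (φ x) * φ x) ^ 2 * (ζ x ^ 2 * (pdx φ x ^ 2 + pdy φ x ^ 2))) Ω := by
  have hcont : ∀ x ∈ Ω, ContinuousAt φ x ∧ ContinuousAt ψ x ∧ ContinuousAt (pdx φ) x ∧
      ContinuousAt (pdy φ) x ∧ ContinuousAt (pdx (φ / ψ)) x ∧ ContinuousAt (pdy (φ / ψ)) x := by
    intro x hx
    have hφA := hφ.contDiffAt (hΩ.mem_nhds hx)
    have hψA := hψ.contDiffAt (hΩ.mem_nhds hx)
    have hhA : ContDiffAt ℝ 2 (φ / ψ) x := hφA.div hψA (hψ0 x hx)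
    exact ⟨hφA.continuousAt, hψA.continuousAt, (hφA.pdx (m := 0) (by simp)).continuousAt,
      (hφA.pdy (m := 0) (by simp)).continuousAt, (hhA.pdx (m := 0) (by simp)).continuousAt,
      (hhA.pdy (m := 0) (by simp)).continuousAt⟩
  have := hχ.continuous
  have := hζ.continuous
  refine ⟨?_, ?_, ?_⟩
  · refine integrableOn_comp_mul_of_frontier (κ := fun t => χ t ^ 2) hΩ hφc hbd
      (hχ0.mono fun t ht => by simp [ht]) (continuousOn_of_forall_continuousAt fun x hx => ?_)
      (hζc.mono fun x hx hζx => hx (by simp [hζx]))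
    obtain ⟨h1, h2, h3, h4, h5, h6⟩ := hcont x hx
    fun_prop
  · refine integrableOn_comp_mul_of_frontier (κ := fun t => χ t ^ 2 * t ^ 2) hΩ hφc hbd
      (hχ0.mono fun t ht => by simp [ht]) (continuousOn_of_forall_continuousAt fun x hx => ?_)
      (hζc.mono' fun x hx => by_contra fun hxζ => hx (by
        simp [pdx_of_notMem_tsupport hxζ, pdy_of_notMem_tsupport hxζ]))
    obtain ⟨h1, h2, h3, h4, h5, h6⟩ := hcont x hx
    have := hζ.continuous_pdx
    have := hζ.continuous_pdy
    fun_prop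
  · refine integrableOn_comp_mul_of_frontier (κ := fun t => (deriv χ t * t) ^ 2) hΩ hφc hbd
      (hχ0.deriv.mono fun t ht => by simp [ht])
      (continuousOn_of_forall_continuousAt fun x hx => ?_)
      (hζc.mono fun x hx hζx => hx (by simp [hζx]))
    obtain ⟨h1, h2, h3, h4, h5, h6⟩ := hcont x hx
    have := hχ.continuous_deriv le_rfl
    fun_prop

theorem caccioppoli_inequality {Ω : Set (ℝ × ℝ)} {φ ψ ζ : ℝ × ℝ → ℝ} {χ : ℝ → ℝ}
    (hΩ : IsOpen Ω) (hφ : ContDiffOn ℝ 2 φ Ω) (hφc : ContinuousOn φ (closure Ω))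
    (hψ : ContDiffOn ℝ 2 ψ Ω) (hψ0 : ∀ p ∈ Ω, ψ p ≠ 0)
    (hdiv : ∀ p ∈ Ω, pdx (fun q => ψ q ^ 2 * pdx (φ / ψ) q) p
      + pdy (fun q => ψ q ^ 2 * pdy (φ / ψ) q) p = 0)
    (hbd : ∀ p ∈ frontier Ω, φ p = 0) (hχ : ContDiff ℝ 1 χ) (hχ0 : χ =ᶠ[𝓝 0] 0)
    (hζ : ContDiff ℝ 1 ζ) (hζc : HasCompactSupport ζ) :
    ∫ x in Ω, χ (φ x) ^ 2 * (ζ x ^ 2 * ψ x ^ 2 * (pdx (φ / ψ) x ^ 2 + pdy (φ / ψ) x ^ 2)) ≤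
      8 * (∫ x in Ω, χ (φ x) ^ 2 * φ x ^ 2 * (pdx ζ x ^ 2 + pdy ζ x ^ 2))
      + 8 * ∫ x in Ω, (deriv χ (φ x) * φ x) ^ 2 * (ζ x ^ 2 * (pdx φ x ^ 2 + pdy φ x ^ 2)) := by
  set h := φ / ψ
  have hφA : ∀ x ∈ Ω, ContDiffAt ℝ 2 φ x := fun x hx => hφ.contDiffAt (hΩ.mem_nhds hx)
  have hψA : ∀ x ∈ Ω, ContDiffAt ℝ 2 ψ x := fun x hx => hψ.contDiffAt (hΩ.mem_nhds hx)
  have hhA : ∀ x ∈ Ω, ContDiffAt ℝ 2 h x := fun x hx => (hφA x hx).div (hψA x hx) (hψ0 x hx)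
  have hχ2 : (fun t => χ t ^ 2) =ᶠ[𝓝 0] 0 := hχ0.mono fun t ht => by simp [ht]
  have hfield : ∀ D : (ℝ × ℝ → ℝ) → ℝ × ℝ → ℝ, (∀ x ∈ Ω, ContDiffAt ℝ 1 (D h) x) →
      ContDiff ℝ 1 (Ω.indicator fun x => χ (φ x) ^ 2 * (ζ x ^ 2 * h x * (ψ x ^ 2 * D h x))) :=
    fun D hD => contDiff_indicator_comp_mul_of_frontier hΩ hφc hbd hχ2 fun x hx => by
      have := (hφA x hx).of_le one_le_two
      have := (hψA x hx).of_le one_le_two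
      have := (hhA x hx).of_le one_le_two
      have := hD x hx
      exact (by fun_prop : ContDiffAt ℝ 1 _ x).contDiffWithinAt
  set F₁ := Ω.indicator fun x => χ (φ x) ^ 2 * (ζ x ^ 2 * h x * (ψ x ^ 2 * pdx h x))
  set F₂ := Ω.indicator fun x => χ (φ x) ^ 2 * (ζ x ^ 2 * h x * (ψ x ^ 2 * pdy h x))
  have hdivF : IntegrableOn (fun x => pdx F₁ x + pdy F₂ x) Ω ∧
      ∫ x in Ω, (pdx F₁ x + pdy F₂ x) = 0 :=
    setIntegral_pdx_add_pdy_eq_zero (hfield pdx fun x hx => (hhA x hx).pdx le_rfl)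
      (hfield pdy fun x hx => (hhA x hx).pdy le_rfl)
      (hζc.mono fun x hx hζx => hx (by simp [F₁, hζx]))
      (hζc.mono fun x hx hζx => hx (by simp [F₂, hζx]))
      (tsupport_indicator_comp_mul_subset hφc hbd hχ2 _)
      (tsupport_indicator_comp_mul_subset hφc hbd hχ2 _)
  have hpoint : ∀ x ∈ Ω,
      χ (φ x) ^ 2 * (ζ x ^ 2 * ψ x ^ 2 * (pdx h x ^ 2 + pdy h x ^ 2)) ≤
        2 * (pdx F₁ x + pdy F₂ x) + 8 * (χ (φ x) ^ 2 * φ x ^ 2 * (pdx ζ x ^ 2 + pdy ζ x ^ 2))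
        + 8 * ((deriv χ (φ x) * φ x) ^ 2 * (ζ x ^ 2 * (pdx φ x ^ 2 + pdy φ x ^ 2))) := by
    intro x hx
    have hloc : ∀ᶠ y in 𝓝 x, y ∈ Ω := hΩ.mem_nhds hx
    rw [Filter.EventuallyEq.pdx_eq (hloc.mono fun y hy => indicator_of_mem hy _),
      Filter.EventuallyEq.pdy_eq (hloc.mono fun y hy => indicator_of_mem hy _)]
    exact caccioppoli_pointwise (hχ.differentiable one_ne_zero) (hζ.differentiable one_ne_zero)
      (hφA x hx) (hψA x hx) (hψ0 x hx) (hdiv x hx)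
  obtain ⟨hT, hW, hZ⟩ :=
    integrableOn_caccioppoli_terms hΩ hφ hφc hψ hψ0 hbd hχ hχ0 hζ hζc
  have hD := hdivF.1.const_mul 2
  have hR : IntegrableOn (fun x => 2 * (pdx F₁ x + pdy F₂ x)
      + 8 * (χ (φ x) ^ 2 * φ x ^ 2 * (pdx ζ x ^ 2 + pdy ζ x ^ 2))
      + 8 * ((deriv χ (φ x) * φ x) ^ 2 * (ζ x ^ 2 * (pdx φ x ^ 2 + pdy φ x ^ 2)))) Ω :=
    (hD.add (hW.const_mul 8)).add (hZ.const_mul 8)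
  calc _ ≤ _ := setIntegral_mono_on hT hR hΩ.measurableSet hpoint
    _ = _ := by
        rw [integral_add, integral_add, integral_const_mul, integral_const_mul,
          integral_const_mul, hdivF.2, mul_zero, zero_add]
        exacts [hD, hW.const_mul 8, hD.add (hW.const_mul 8), hZ.const_mul 8]

theorem setIntegral_sq_mul_gradient_cutoff_le {Ω : Set (ℝ × ℝ)} {φ ζ : ℝ × ℝ → ℝ} {χ : ℝ → ℝ}
    {R C η : ℝ} (hΩ : MeasurableSet Ω) (hR : 0 < R) (hχ : ∀ t, χ t ^ 2 ≤ 1)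
    (hζ1 : ∀ p : ℝ × ℝ, √(p.1 ^ 2 + p.2 ^ 2) ≤ R → ζ p = 1)
    (hζ0 : ∀ p : ℝ × ℝ, 2 * R ≤ √(p.1 ^ 2 + p.2 ^ 2) → ζ p = 0)
    (hζC : ∀ p : ℝ × ℝ, √(pdx ζ p ^ 2 + pdy ζ p ^ 2) ≤ C / R)
    (hφη : ∀ p ∈ Ω, R ≤ √(p.1 ^ 2 + p.2 ^ 2) → |φ p| ≤ η) :
    ∫ x in Ω, χ (φ x) ^ 2 * φ x ^ 2 * (pdx ζ x ^ 2 + pdy ζ x ^ 2) ≤ 16 * C ^ 2 * η ^ 2 := by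
  have hgrad0 : ∀ x : ℝ × ℝ, √(x.1 ^ 2 + x.2 ^ 2) < R ∨ 2 * R < √(x.1 ^ 2 + x.2 ^ 2) →
      pdx ζ x = 0 ∧ pdy ζ x = 0 := by
    intro x hx
    obtain ⟨c, hc⟩ : ∃ c, ζ =ᶠ[𝓝 x] fun _ => c := by
      rcases hx with hx | hx
      · exact ⟨1, Eventually.mono ((isOpen_lt (f := fun y : ℝ × ℝ => √(y.1 ^ 2 + y.2 ^ 2))
          (by fun_prop) continuous_const).mem_nhds hx)
          fun y hy => hζ1 y (le_of_lt hy)⟩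
      · exact ⟨0, Eventually.mono ((isOpen_lt (g := fun y : ℝ × ℝ => √(y.1 ^ 2 + y.2 ^ 2))
          continuous_const (by fun_prop)).mem_nhds hx)
          fun y hy => hζ0 y (le_of_lt hy)⟩
    exact ⟨pdx_eq_zero_of_eventuallyEq_const hc, pdy_eq_zero_of_eventuallyEq_const hc⟩
  set B := Metric.closedBall (0 : ℝ × ℝ) (2 * R)
  have hle : ∀ x ∈ Ω, χ (φ x) ^ 2 * φ x ^ 2 * (pdx ζ x ^ 2 + pdy ζ x ^ 2) ≤
      B.indicator (fun _ => η ^ 2 * (C / R) ^ 2) x := by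
    intro x hx
    by_cases hmid : R ≤ √(x.1 ^ 2 + x.2 ^ 2) ∧ √(x.1 ^ 2 + x.2 ^ 2) ≤ 2 * R
    · rw [indicator_of_mem (mem_closedBall_zero_iff.2 ((norm_le_sqrt_sq_add_sq x).trans hmid.2))]
      have hφx := abs_le.1 (hφη x hx hmid.1)
      calc _ ≤ 1 * η ^ 2 * (C / R) ^ 2 :=
            mul_le_mul (mul_le_mul (hχ _) (sq_le_sq' hφx.1 hφx.2) (by positivity) zero_le_one)
              (Real.sqrt_le_iff.1 (hζC x)).2 (by positivity) (by positivity)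
        _ = _ := by ring
    · rw [not_and_or, not_le, not_le] at hmid
      obtain ⟨h1, h2⟩ := hgrad0 x hmid
      simp only [h1, h2]
      simpa using indicator_nonneg (fun _ _ => by positivity) x
  have hBint : Integrable (B.indicator fun _ => η ^ 2 * (C / R) ^ 2) :=
    (integrable_indicator_iff measurableSet_closedBall).2
      (integrableOn_const (measure_closedBall_lt_top).ne)
  calc _ ≤ ∫ x in Ω, B.indicator (fun _ => η ^ 2 * (C / R) ^ 2) x :=
        integral_mono_of_nonneg (Eventually.of_forall fun x => by positivity) hBint.integrableOn
          ((ae_restrict_iff' hΩ).2 (Eventually.of_forall hle))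
    _ ≤ ∫ x, B.indicator (fun _ => η ^ 2 * (C / R) ^ 2) x :=
        setIntegral_le_integral hBint (Eventually.of_forall fun x =>
          indicator_nonneg (fun _ _ => by positivity) x)
    _ = 16 * C ^ 2 * η ^ 2 := by
        rw [integral_indicator_const _ measurableSet_closedBall,
          volume_real_closedBall_zero _ (by positivity), smul_eq_mul]
        field_simp
        ring

theorem tendsto_setIntegral_sq_deriv_levelCutoff_mul {Ω : Set (ℝ × ℝ)} {φ ζ : ℝ × ℝ → ℝ}
    (hΩ : IsOpen Ω) (hφ : ContDiffOn ℝ 1 φ (closure Ω)) (hζ : Continuous ζ)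
    (hζc : HasCompactSupport ζ) :
    Tendsto (fun ε => ∫ x in Ω,
        (deriv (levelCutoff ε) (φ x) * φ x) ^ 2 * (ζ x ^ 2 * (pdx φ x ^ 2 + pdy φ x ^ 2)))
      (𝓝[>] 0) (𝓝 0) := by
  obtain ⟨c, hc⟩ := exists_abs_deriv_levelCutoff_mul_self_le
  obtain ⟨B, hB⟩ := hζ.bounded_above_of_compact_support hζc
  obtain ⟨M, hM⟩ := exists_norm_fderiv_le_of_contDiffOn_closure hΩ hφ hζc
  have hφA : ∀ x ∈ Ω, ContDiffAt ℝ 1 φ x := fun x hx =>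
    hφ.contDiffAt (mem_of_superset (hΩ.mem_nhds hx) subset_closure)
  have hbound : ∀ ε, ∀ x ∈ Ω, ‖(deriv (levelCutoff ε) (φ x) * φ x) ^ 2 *
      (ζ x ^ 2 * (pdx φ x ^ 2 + pdy φ x ^ 2))‖ ≤
      (tsupport ζ).indicator (fun _ => c ^ 2 * (B ^ 2 * (M ^ 2 + M ^ 2))) x := by
    intro ε x hx
    by_cases hxζ : x ∈ tsupport ζ
    · have hd := (hφA x hx).differentiableAt one_ne_zero
      have hMx := hM x ⟨hx, hxζ⟩
      rw [indicator_of_mem hxζ, Real.norm_of_nonneg (by positivity)]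
      rw [← sq_abs (_ * _), ← sq_abs (ζ x), ← sq_abs (pdx φ x), ← sq_abs (pdy φ x)]
      gcongr
      · exact hc ε (φ x)
      · exact hB x
      · exact (abs_pdx_le_norm_fderiv hd).trans hMx
      · exact (abs_pdy_le_norm_fderiv hd).trans hMx
    · simp [image_eq_zero_of_notMem_tsupport hxζ, hxζ]
  have h0 := tendsto_integral_filter_of_dominated_convergence (μ := volume.restrict Ω)
    (l := 𝓝[>] (0 : ℝ)) (f := fun _ => (0 : ℝ)) _ ?_
    (Eventually.of_forall fun ε => (ae_restrict_iff' hΩ.measurableSet).2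
      (Eventually.of_forall (hbound ε)))
    ((integrable_indicator_iff (isClosed_tsupport ζ).measurableSet).2
      (integrableOn_const hζc.measure_lt_top.ne)).integrableOn
    (Eventually.of_forall fun x => by
      simpa using ((tendsto_deriv_levelCutoff_mul_self (φ x)).pow 2).mul_const
        (ζ x ^ 2 * (pdx φ x ^ 2 + pdy φ x ^ 2)))
  · simpa using h0
  refine Eventually.of_forall fun ε => ContinuousOn.aestronglyMeasurable ?_ hΩ.measurableSet
  refine continuousOn_of_forall_continuousAt fun x hx => ?_
  have := (contDiff_levelCutoff (ε := ε) (n := 1)).continuous_deriv le_rfl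
  have := (hφA x hx).continuousAt
  have := ((hφA x hx).pdx (m := 0) (by simp)).continuousAt
  have := ((hφA x hx).pdy (m := 0) (by simp)).continuousAt
  fun_prop

theorem exists_levelCutoff_setIntegral_energy_le {Ω : Set (ℝ × ℝ)} {ψ φ ζ : ℝ × ℝ → ℝ}
    {R C η δ ε₀ : ℝ} (hΩ : IsOpen Ω) (hψ : ContDiffOn ℝ 2 ψ Ω)
    (hφ : ContDiffOn ℝ 2 φ (closure Ω)) (hψ0 : ∀ p ∈ Ω, ψ p ≠ 0)
    (hdiv : ∀ p ∈ Ω, pdx (fun q => ψ q ^ 2 * pdx (φ / ψ) q) p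
      + pdy (fun q => ψ q ^ 2 * pdy (φ / ψ) q) p = 0)
    (hbd : ∀ p ∈ frontier Ω, φ p = 0) (hR : 0 < R)
    (hφη : ∀ p ∈ Ω, R ≤ √(p.1 ^ 2 + p.2 ^ 2) → |φ p| ≤ η) (hζ : ContDiff ℝ 1 ζ)
    (hζ1 : ∀ p : ℝ × ℝ, √(p.1 ^ 2 + p.2 ^ 2) ≤ R → ζ p = 1)
    (hζ0 : ∀ p : ℝ × ℝ, 2 * R ≤ √(p.1 ^ 2 + p.2 ^ 2) → ζ p = 0)
    (hζC : ∀ p : ℝ × ℝ, √(pdx ζ p ^ 2 + pdy ζ p ^ 2) ≤ C / R) (hδ : 0 < δ) (hε₀ : 0 < ε₀) :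
    ∃ ε ∈ Ioo 0 ε₀, IntegrableOn (fun x => levelCutoff ε (φ x) ^ 2 *
        (ζ x ^ 2 * ψ x ^ 2 * (pdx (φ / ψ) x ^ 2 + pdy (φ / ψ) x ^ 2))) Ω ∧
      ∫ x in Ω, levelCutoff ε (φ x) ^ 2 *
        (ζ x ^ 2 * ψ x ^ 2 * (pdx (φ / ψ) x ^ 2 + pdy (φ / ψ) x ^ 2))
        ≤ 128 * C ^ 2 * η ^ 2 + δ := by
  have hζc : HasCompactSupport ζ :=
    HasCompactSupport.intro (isCompact_closedBall (0 : ℝ × ℝ) (2 * R)) fun x hx => hζ0 x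
      ((not_le.1 fun h => hx (mem_closedBall_zero_iff.2 h)).le.trans (norm_le_sqrt_sq_add_sq x))
  obtain ⟨ε, hεZ, hε⟩ := ((tendsto_setIntegral_sq_deriv_levelCutoff_mul hΩ (hφ.of_le one_le_two)
    hζ.continuous hζc).eventually (gt_mem_nhds (show 0 < δ / 8 by positivity))).and
    (Ioo_mem_nhdsGT hε₀) |>.exists
  have hcacc := caccioppoli_inequality hΩ (hφ.mono subset_closure) hφ.continuousOn hψ hψ0 hdiv
    hbd contDiff_levelCutoff (levelCutoff_eventuallyEq_zero hε.1) hζ hζc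
  have hT := (integrableOn_caccioppoli_terms hΩ (hφ.mono subset_closure) hφ.continuousOn hψ hψ0
    hbd contDiff_levelCutoff (levelCutoff_eventuallyEq_zero hε.1) hζ hζc).1
  have hW := setIntegral_sq_mul_gradient_cutoff_le hΩ.measurableSet hR
    (fun t => levelCutoff_sq_le_one (ε := ε) (t := t)) hζ1 hζ0 hζC hφη
  exact ⟨ε, hε, hT, by linarith⟩

theorem exists_cutoffs_setIntegral_energy_lt {Ω : Set (ℝ × ℝ)} {ψ φ : ℝ × ℝ → ℝ} {C δ ε₀ : ℝ}
    (hΩ : IsOpen Ω) (hψ : ContDiffOn ℝ 2 ψ Ω) (hφ : ContDiffOn ℝ 2 φ (closure Ω))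
    (hψ0 : ∀ p ∈ Ω, ψ p ≠ 0)
    (hdiv : ∀ p ∈ Ω, pdx (fun q => ψ q ^ 2 * pdx (φ / ψ) q) p
      + pdy (fun q => ψ q ^ 2 * pdy (φ / ψ) q) p = 0)
    (hbd : ∀ p ∈ frontier Ω, φ p = 0)
    (hφ0 : ∀ ε > (0:ℝ), ∃ R : ℝ, ∀ p ∈ Ω, R ≤ √(p.1 ^ 2 + p.2 ^ 2) → |φ p| ≤ ε)
    (hcut : ∀ R ≥ (1:ℝ), ∃ ζ : ℝ × ℝ → ℝ, ContDiff ℝ 1 ζ ∧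
      (∀ p : ℝ × ℝ, √(p.1 ^ 2 + p.2 ^ 2) ≤ R → ζ p = 1) ∧
      (∀ p : ℝ × ℝ, 2 * R ≤ √(p.1 ^ 2 + p.2 ^ 2) → ζ p = 0) ∧
      (∀ p : ℝ × ℝ, √((pdx ζ p) ^ 2 + (pdy ζ p) ^ 2) ≤ C / R))
    (hδ : 0 < δ) (r : ℝ) (hε₀ : 0 < ε₀) :
    ∃ ζ : ℝ × ℝ → ℝ, (∀ p : ℝ × ℝ, √(p.1 ^ 2 + p.2 ^ 2) ≤ r → ζ p = 1) ∧
      ∃ ε ∈ Ioo 0 ε₀, IntegrableOn (fun x => levelCutoff ε (φ x) ^ 2 *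
        (ζ x ^ 2 * ψ x ^ 2 * (pdx (φ / ψ) x ^ 2 + pdy (φ / ψ) x ^ 2))) Ω ∧
      ∫ x in Ω, levelCutoff ε (φ x) ^ 2 *
        (ζ x ^ 2 * ψ x ^ 2 * (pdx (φ / ψ) x ^ 2 + pdy (φ / ψ) x ^ 2)) < δ := by
  obtain ⟨η, hη, hηδ⟩ : ∃ η > 0, 128 * C ^ 2 * η ^ 2 < δ / 2 := by
    have : Tendsto (fun η : ℝ => 128 * C ^ 2 * η ^ 2) (𝓝[>] 0) (𝓝 0) := by
      simpa using ((by fun_prop : Continuous fun η : ℝ => 128 * C ^ 2 * η ^ 2).tendsto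
        0).mono_left nhdsWithin_le_nhds
    exact ((this.eventually (gt_mem_nhds (by positivity))).and self_mem_nhdsWithin).exists.imp
      fun η h => ⟨h.2, h.1⟩
  obtain ⟨R₀, hR₀⟩ := hφ0 η hη
  obtain ⟨ζ, hζ, hζ1, hζ0, hζC⟩ := hcut (max 1 (max R₀ r)) (le_max_left _ _)
  obtain ⟨ε, hε, hT, hTle⟩ := exists_levelCutoff_setIntegral_energy_le hΩ hψ hφ hψ0 hdiv hbd
    (by positivity) (fun x hx hxR => hR₀ x hx ((le_max_left _ _).trans
      ((le_max_right _ _).trans hxR))) hζ hζ1 hζ0 hζC (half_pos hδ) hε₀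
  exact ⟨ζ, fun x hx => hζ1 x (hx.trans ((le_max_right _ _).trans (le_max_right _ _))), ε, hε,
    hT, by linarith⟩

theorem energy_density_eq_zero_of_ne_zero {Ω : Set (ℝ × ℝ)} {ψ φ : ℝ × ℝ → ℝ} {C : ℝ}
    (hΩ : IsOpen Ω) (hψ : ContDiffOn ℝ 2 ψ Ω) (hφ : ContDiffOn ℝ 2 φ (closure Ω))
    (hψ0 : ∀ p ∈ Ω, ψ p ≠ 0)
    (hdiv : ∀ p ∈ Ω, pdx (fun q => ψ q ^ 2 * pdx (φ / ψ) q) p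
      + pdy (fun q => ψ q ^ 2 * pdy (φ / ψ) q) p = 0)
    (hbd : ∀ p ∈ frontier Ω, φ p = 0)
    (hφ0 : ∀ ε > (0:ℝ), ∃ R : ℝ, ∀ p ∈ Ω, R ≤ √(p.1 ^ 2 + p.2 ^ 2) → |φ p| ≤ ε)
    (hcut : ∀ R ≥ (1:ℝ), ∃ ζ : ℝ × ℝ → ℝ, ContDiff ℝ 1 ζ ∧
      (∀ p : ℝ × ℝ, √(p.1 ^ 2 + p.2 ^ 2) ≤ R → ζ p = 1) ∧
      (∀ p : ℝ × ℝ, 2 * R ≤ √(p.1 ^ 2 + p.2 ^ 2) → ζ p = 0) ∧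
      (∀ p : ℝ × ℝ, √((pdx ζ p) ^ 2 + (pdy ζ p) ^ 2) ≤ C / R))
    {p : ℝ × ℝ} (hp : p ∈ Ω) (hφp : φ p ≠ 0) :
    ψ p ^ 2 * (pdx (φ / ψ) p ^ 2 + pdy (φ / ψ) p ^ 2) = 0 := by
  set A := fun x => ψ x ^ 2 * (pdx (φ / ψ) x ^ 2 + pdy (φ / ψ) x ^ 2)
  by_contra hA
  have hA0 : 0 < A p := lt_of_le_of_ne (by positivity) (Ne.symm hA)
  have hφA : ContDiffAt ℝ 2 φ p :=
    hφ.contDiffAt (mem_of_superset (hΩ.mem_nhds hp) subset_closure)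
  have hψA : ContDiffAt ℝ 2 ψ p := hψ.contDiffAt (hΩ.mem_nhds hp)
  have hAc : ContinuousAt A p := by
    have := hψA.continuousAt
    have := ((hφA.div hψA (hψ0 p hp)).pdx (m := 0) (by simp)).continuousAt
    have := ((hφA.div hψA (hψ0 p hp)).pdy (m := 0) (by simp)).continuousAt
    fun_prop
  obtain ⟨ρ, hρ, hball⟩ : ∃ ρ > 0, ∀ x ∈ Metric.ball p ρ,
      x ∈ Ω ∧ A p / 2 < A x ∧ |φ p| / 2 < |φ x| :=
    Metric.eventually_nhds_iff_ball.1 (Eventually.and (hΩ.mem_nhds hp)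
      ((hAc.eventually (lt_mem_nhds (half_lt_self hA0))).and
        (hφA.continuousAt.abs.eventually (lt_mem_nhds (half_lt_self (abs_pos.2 hφp))))))
  have hV : 0 < volume.real (Metric.ball p ρ) :=
    ENNReal.toReal_pos (Metric.measure_ball_pos volume p hρ).ne' measure_ball_lt_top.ne
  obtain ⟨ζ, hζ1, ε, hε, hT, hTlt⟩ := exists_cutoffs_setIntegral_energy_lt hΩ hψ hφ hψ0 hdiv hbd
    hφ0 hcut (show 0 < A p / 2 * volume.real (Metric.ball p ρ) by positivity) (2 * (‖p‖ + ρ))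
    (show 0 < |φ p| / 4 by positivity)
  have hlow := mul_measureReal_le_setIntegral hΩ.measurableSet measurableSet_ball
    measure_ball_lt_top.ne (fun x hx => (hball x hx).1) hT (fun x _ => by positivity)
    fun x hx => by
      obtain ⟨-, hAx, hφx⟩ := hball x hx
      have hxp : ‖x‖ ≤ ‖p‖ + ρ := by
        linarith [dist_triangle x p 0, Metric.mem_ball.1 hx, dist_zero_right x,
          dist_zero_right p]
      rw [levelCutoff_of_le hε.1 (by linarith [hε.2]),
        hζ1 x ((sqrt_sq_add_sq_le_two_mul_norm x).trans (by linarith))]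
      simpa [A, mul_assoc] using hAx.le
  linarith

theorem ghoussoub_gui_liouville_general
    (Ω : Set (ℝ × ℝ)) (hΩ : IsOpen Ω)
    (ψ φ : ℝ × ℝ → ℝ)
    (hψ : ContDiffOn ℝ 2 ψ Ω) (hφ : ContDiffOn ℝ 2 φ (closure Ω))
    (hψpos : ∀ p ∈ Ω, 0 < ψ p)
    (h : ℝ × ℝ → ℝ) (hdef : ∀ p, h p = φ p / ψ p)
    (hdiv : ∀ p ∈ Ω,
      pdx (fun q => ψ q ^ 2 * pdx h q) p + pdy (fun q => ψ q ^ 2 * pdy h q) p = 0)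
    (hbd : ∀ p ∈ frontier Ω, φ p = 0)
    (hφ0 : ∀ ε > (0:ℝ), ∃ R : ℝ, ∀ p ∈ Ω, R ≤ Real.sqrt (p.1 ^ 2 + p.2 ^ 2) → |φ p| ≤ ε)
    (C : ℝ)
    (hcut : ∀ R ≥ (1:ℝ), ∃ ζ : ℝ × ℝ → ℝ, ContDiff ℝ 1 ζ ∧
      (∀ p : ℝ × ℝ, Real.sqrt (p.1 ^ 2 + p.2 ^ 2) ≤ R → ζ p = 1) ∧
      (∀ p : ℝ × ℝ, 2 * R ≤ Real.sqrt (p.1 ^ 2 + p.2 ^ 2) → ζ p = 0) ∧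
      (∀ p : ℝ × ℝ, Real.sqrt ((pdx ζ p) ^ 2 + (pdy ζ p) ^ 2) ≤ C / R)) :
    (∫ p in Ω, ((pdx h p) ^ 2 + (pdy h p) ^ 2) * ψ p ^ 2) = 0 ∧
    ∀ p ∈ Ω, pdx h p = 0 ∧ pdy h p = 0 := by
  obtain rfl : h = φ / ψ := funext hdef
  have hψ0 : ∀ p ∈ Ω, ψ p ≠ 0 := fun p hp => (hψpos p hp).ne'
  have hzero : ∀ p ∈ Ω, (φ / ψ) p ≠ 0 → pdx (φ / ψ) p = 0 ∧ pdy (φ / ψ) p = 0 := by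
    intro p hp hhp
    have hA := energy_density_eq_zero_of_ne_zero hΩ hψ hφ hψ0 hdiv hbd hφ0 hcut hp
      (div_ne_zero_iff.1 hhp).1
    have hsq := (mul_eq_zero.1 hA).resolve_left (pow_ne_zero 2 (hψ0 p hp))
    rw [add_eq_zero_iff_of_nonneg (sq_nonneg _) (sq_nonneg _)] at hsq
    exact ⟨pow_eq_zero_iff two_ne_zero |>.1 hsq.1, pow_eq_zero_iff two_ne_zero |>.1 hsq.2⟩
  have hgrad : ∀ p ∈ Ω, pdx (φ / ψ) p = 0 ∧ pdy (φ / ψ) p = 0 := by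
    intro p hp
    have hhA : ContDiffAt ℝ 2 (φ / ψ) p :=
      (hφ.contDiffAt (mem_of_superset (hΩ.mem_nhds hp) subset_closure)).div
        (hψ.contDiffAt (hΩ.mem_nhds hp)) (hψ0 p hp)
    have hev := Eventually.mono (hΩ.mem_nhds hp) hzero
    exact ⟨pdx_eq_zero_of_eventually_ne_zero_imp (hhA.pdx (m := 0) (by simp)).continuousAt
        (hev.mono fun x hx hne => (hx hne).1),
      pdy_eq_zero_of_eventually_ne_zero_imp (hhA.pdy (m := 0) (by simp)).continuousAt
        (hev.mono fun x hx hne => (hx hne).2)⟩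
  exact ⟨setIntegral_eq_zero_of_forall_eq_zero fun p hp => by simp [hgrad p hp], hgrad⟩

/-- Ghoussoub–Gui logarithmic cutoff argument: if `div(ψ²∇(φ/ψ)) = 0`
on `Ω`, `φ` vanishes on `∂Ω`, is bounded and tends to `0` at infinity, and cutoffs
`ζ_R` with `|∇ζ_R| ≤ C/R` exist, then `∫_Ω |∇(φ/ψ)|² ψ² = 0`, hence `φ/ψ` is locally
constant on `Ω`. -/
theorem ghoussoub_gui_liouville
    (Ω : Set (ℝ × ℝ)) (hΩ : IsOpen Ω)
    (ψ φ : ℝ × ℝ → ℝ)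
    (hψ : ContDiffOn ℝ 2 ψ Ω) (hφ : ContDiffOn ℝ 2 φ (closure Ω))
    (hψpos : ∀ p ∈ Ω, 0 < ψ p)
    (h : ℝ × ℝ → ℝ) (hdef : ∀ p, h p = φ p / ψ p)
    (hdiv : ∀ p ∈ Ω,
      pdx (fun q => ψ q ^ 2 * pdx h q) p + pdy (fun q => ψ q ^ 2 * pdy h q) p = 0)
    (hbd : ∀ p ∈ frontier Ω, φ p = 0)
    (hφbdd : ∃ M : ℝ, ∀ p ∈ Ω, |φ p| ≤ M)
    (hφ0 : ∀ ε > (0:ℝ), ∃ R : ℝ, ∀ p ∈ Ω, R ≤ Real.sqrt (p.1 ^ 2 + p.2 ^ 2) → |φ p| ≤ ε)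
    (C : ℝ) (hC : 0 < C)
    (hcut : ∀ R ≥ (1:ℝ), ∃ ζ : ℝ × ℝ → ℝ, ContDiff ℝ 1 ζ ∧
      (∀ p : ℝ × ℝ, Real.sqrt (p.1 ^ 2 + p.2 ^ 2) ≤ R → ζ p = 1) ∧
      (∀ p : ℝ × ℝ, 2 * R ≤ Real.sqrt (p.1 ^ 2 + p.2 ^ 2) → ζ p = 0) ∧
      (∀ p : ℝ × ℝ, Real.sqrt ((pdx ζ p) ^ 2 + (pdy ζ p) ^ 2) ≤ C / R)) :
    (∫ p in Ω, ((pdx h p) ^ 2 + (pdy h p) ^ 2) * ψ p ^ 2) = 0 ∧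
    ∀ p ∈ Ω, pdx h p = 0 ∧ pdy h p = 0 :=
  ghoussoub_gui_liouville_general Ω hΩ ψ φ hψ hφ hψpos h hdef hdiv hbd hφ0 C hcut
end

section
/- For α > 0, the radial function Φ(x) := e^{−α√(1+|x|²)} on ℝ² satisfies (−Δ + α²) Φ ≥ 0 everywhere. -/
/-!
Write `s = √(1 + |x|²)`. Each coordinate slice of `Φ = e^{-α s}` is `t ↦ e^{-α √(t² + a)}` with `a > 0`,
whose second derivative is `e^{-α s} (α² t² / s² - α a / s³)`. Summing the two slices gives
`(-Δ + α²) Φ = Φ (α² / s² + α (1 + s²) / s³)`, which is nonnegative for `α ≥ 0`.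
-/

open Real

lemma lap_apply (f : ℝ × ℝ → ℝ) (p : ℝ × ℝ) :
    lap f p = deriv (deriv fun t => f (t, p.2)) p.1 + deriv (deriv fun t => f (p.1, t)) p.2 :=
  rfl

section SliceDerivatives

variable {a : ℝ} (ha : 0 < a)
include ha

lemma hasDerivAt_sqrt_sq_add (t : ℝ) :
    HasDerivAt (fun t => √(t ^ 2 + a)) (t / √(t ^ 2 + a)) t := by
  have hsq : HasDerivAt (fun t : ℝ => t ^ 2 + a) (2 * t) t := by
    simpa using (hasDerivAt_pow 2 t).add_const a
  convert hsq.sqrt (by positivity) using 1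
  field_simp

lemma deriv_exp_neg_mul_sqrt_sq_add (α : ℝ) :
    deriv (fun t => exp (-α * √(t ^ 2 + a))) =
      fun t => -α * t / √(t ^ 2 + a) * exp (-α * √(t ^ 2 + a)) := by
  funext t
  convert (((hasDerivAt_sqrt_sq_add ha t).const_mul (-α)).exp).deriv using 1
  ring

lemma deriv_deriv_exp_neg_mul_sqrt_sq_add (α t : ℝ) :
    deriv (deriv fun t => exp (-α * √(t ^ 2 + a))) t =
      exp (-α * √(t ^ 2 + a)) *
        (α ^ 2 * t ^ 2 / √(t ^ 2 + a) ^ 2 - α * a / √(t ^ 2 + a) ^ 3) := by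
  have hs : 0 < √(t ^ 2 + a) := sqrt_pos.mpr (by positivity)
  have hs2 : √(t ^ 2 + a) ^ 2 = t ^ 2 + a := sq_sqrt (by positivity)
  have hsqrt := hasDerivAt_sqrt_sq_add ha t
  have hderiv := (((hasDerivAt_id' t).const_mul (-α)).fun_div hsqrt hs.ne').fun_mul
    (hsqrt.const_mul (-α)).exp
  rw [deriv_exp_neg_mul_sqrt_sq_add ha, hderiv.deriv]
  field_simp
  linear_combination (-α) * hs2

end SliceDerivatives

/-- For `α > 0`, the function `Φ(x) = e^{-α√(1+|x|²)}` on `ℝ²`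
satisfies `(-Δ + α²) Φ ≥ 0` everywhere. -/
theorem exponential_supersolution
    (α : ℝ) (hα : 0 < α)
    (Φ : ℝ × ℝ → ℝ)
    (hΦ : ∀ p : ℝ × ℝ, Φ p = Real.exp (-α * Real.sqrt (1 + (p.1 ^ 2 + p.2 ^ 2)))) :
    ∀ p : ℝ × ℝ, 0 ≤ -lap Φ p + α ^ 2 * Φ p := by
  rintro ⟨x, y⟩
  have hΦx : (fun t => Φ (t, y)) = fun t => exp (-α * √(t ^ 2 + (1 + y ^ 2))) :=
    funext fun t => by rw [hΦ]; ring_nf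
  have hΦy : (fun t => Φ (x, t)) = fun t => exp (-α * √(t ^ 2 + (1 + x ^ 2))) :=
    funext fun t => by rw [hΦ]; ring_nf
  have hsx : √(x ^ 2 + (1 + y ^ 2)) = √(1 + (x ^ 2 + y ^ 2)) := by ring_nf
  have hsy : √(y ^ 2 + (1 + x ^ 2)) = √(1 + (x ^ 2 + y ^ 2)) := by ring_nf
  rw [lap_apply, hΦx, hΦy, deriv_deriv_exp_neg_mul_sqrt_sq_add (by positivity),
    deriv_deriv_exp_neg_mul_sqrt_sq_add (by positivity), hsx, hsy, hΦ]
  set s := √(1 + (x ^ 2 + y ^ 2))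
  have hs : 0 < s := sqrt_pos.mpr (by positivity)
  have hs2 : s ^ 2 = 1 + (x ^ 2 + y ^ 2) := sq_sqrt (by positivity)
  have hfactor : -(exp (-α * s) * (α ^ 2 * x ^ 2 / s ^ 2 - α * (1 + y ^ 2) / s ^ 3) +
      exp (-α * s) * (α ^ 2 * y ^ 2 / s ^ 2 - α * (1 + x ^ 2) / s ^ 3)) + α ^ 2 * exp (-α * s) =
      exp (-α * s) * (α ^ 2 / s ^ 2 + α * (1 + s ^ 2) / s ^ 3) := by
    field_simp
    linear_combination (α * s - 1) * hs2
  rw [hfactor]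
  positivity
end

section
/- Let μ₁ be the first Dirichlet eigenvalue of −Δ on the unit ball in ℝ², and let φ_R(x) := φ₁(x/R) be the first eigenfunction scaled to B(0,R), so −Δφ_R = (μ₁/R²) φ_R. Suppose F'(s) R² ≤ −μ₁ s for all s ∈ [0, 1−δ], u solves Δu = F'(u) on B(x̄,2R) with 0 < u < 1 there. Then u ≥ 1 − δ on B(x̄, R). -/
open Real Set

noncomputable def dist2 (p q : ℝ × ℝ) : ℝ := Real.sqrt ((p.1 - q.1) ^ 2 + (p.2 - q.2) ^ 2)


/-! ### Auxiliary lemmas on directional derivatives -/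

noncomputable def Dv (v : ℝ × ℝ) (f : ℝ × ℝ → ℝ) : ℝ × ℝ → ℝ := fun p => fderiv ℝ f p v

lemma Dv_contDiff {n : ℕ∞} {f : ℝ × ℝ → ℝ} (v : ℝ × ℝ) (hf : ContDiff ℝ (n + 1) f) :
    ContDiff ℝ n (Dv v f) :=
  (hf.fderiv_right le_rfl).clm_apply contDiff_const

lemma pdx_eq_Dv {f : ℝ × ℝ → ℝ} (hf : Differentiable ℝ f) (p : ℝ × ℝ) :
    pdx f p = Dv (1, 0) f p := by
  have h1 : HasDerivAt (fun t : ℝ => ((t, p.2) : ℝ × ℝ)) (1, 0) p.1 :=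
    (hasDerivAt_id p.1).prodMk (hasDerivAt_const p.1 p.2)
  have h2 := (hf (p.1, p.2)).hasFDerivAt.comp_hasDerivAt p.1 h1
  simpa [pdx, Dv, Function.comp_def] using h2.deriv

lemma pdy_eq_Dv {f : ℝ × ℝ → ℝ} (hf : Differentiable ℝ f) (p : ℝ × ℝ) :
    pdy f p = Dv (0, 1) f p := by
  have h1 : HasDerivAt (fun t : ℝ => ((p.1, t) : ℝ × ℝ)) (0, 1) p.2 :=
    (hasDerivAt_const p.2 p.1).prodMk (hasDerivAt_id p.2)
  have h2 := (hf (p.1, p.2)).hasFDerivAt.comp_hasDerivAt p.2 h1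
  simpa [pdy, Dv, Function.comp_def] using h2.deriv

lemma lap_eq_Dv {f : ℝ × ℝ → ℝ} (hf : ContDiff ℝ 2 f) (p : ℝ × ℝ) :
    lap f p = Dv (1, 0) (Dv (1, 0) f) p + Dv (0, 1) (Dv (0, 1) f) p := by
  have hd : Differentiable ℝ f := hf.differentiable (by norm_num)
  have h1 : ContDiff ℝ 1 (Dv (1, 0) f) :=
    Dv_contDiff _ (show ContDiff ℝ ((1:ℕ∞)+1) f from by exact hf)
  have h2 : ContDiff ℝ 1 (Dv (0, 1) f) :=
    Dv_contDiff _ (show ContDiff ℝ ((1:ℕ∞)+1) f from by exact hf)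
  have e1 : pdx f = Dv (1, 0) f := funext fun q => pdx_eq_Dv hd q
  have e2 : pdy f = Dv (0, 1) f := funext fun q => pdy_eq_Dv hd q
  rw [lap, e1, e2, pdx_eq_Dv (h1.differentiable (by norm_num)), pdy_eq_Dv (h2.differentiable (by norm_num))]

lemma Dv_sub_mul {f g : ℝ × ℝ → ℝ} (hf : Differentiable ℝ f) (hg : Differentiable ℝ g)
    (v : ℝ × ℝ) (c : ℝ) (x : ℝ × ℝ) :
    Dv v (fun y => f y - c * g y) x = Dv v f x - c * Dv v g x := by
  have h : HasFDerivAt (fun y => f y - c * g y) (fderiv ℝ f x - c • fderiv ℝ g x) x :=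
    (hf x).hasFDerivAt.sub ((hg x).hasFDerivAt.const_smul c)
  simp [Dv, h.fderiv, ContinuousLinearMap.sub_apply, ContinuousLinearMap.smul_apply,
    smul_eq_mul]

lemma Dv_const_mul {g : ℝ × ℝ → ℝ} (hg : Differentiable ℝ g) (v : ℝ × ℝ) (c : ℝ) (x : ℝ × ℝ) :
    Dv v (fun y => c * g y) x = c * Dv v g x := by
  have h : HasFDerivAt (fun y => c * g y) (c • fderiv ℝ g x) x :=
    (hg x).hasFDerivAt.const_smul c
  simp [Dv, h.fderiv, ContinuousLinearMap.smul_apply, smul_eq_mul]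

lemma Dv_comp_scale {g : ℝ × ℝ → ℝ} (hg : Differentiable ℝ g) (v : ℝ × ℝ) (c : ℝ)
    (p₀ x : ℝ × ℝ) :
    Dv v (fun y => g (c • (y - p₀))) x = c * Dv v g (c • (x - p₀)) := by
  have hA : HasFDerivAt (fun y : ℝ × ℝ => c • (y - p₀)) (c • ContinuousLinearMap.id ℝ (ℝ × ℝ)) x :=
    ((hasFDerivAt_id x).sub_const p₀).const_smul c
  have h : HasFDerivAt (fun y => g (c • (y - p₀)))
      ((fderiv ℝ g (c • (x - p₀))).comp (c • ContinuousLinearMap.id ℝ (ℝ × ℝ))) x :=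
    (hg (c • (x - p₀))).hasFDerivAt.comp x hA
  simp [Dv, h.fderiv, ContinuousLinearMap.comp_apply, map_smul, smul_eq_mul]

lemma lap_sub_mul {f g : ℝ × ℝ → ℝ} (hf : ContDiff ℝ 2 f) (hg : ContDiff ℝ 2 g)
    (c : ℝ) (x : ℝ × ℝ) :
    lap (fun y => f y - c * g y) x = lap f x - c * lap g x := by
  have hfd : Differentiable ℝ f := hf.differentiable (by norm_num)
  have hgd : Differentiable ℝ g := hg.differentiable (by norm_num)
  have hcomb : ContDiff ℝ 2 (fun y => f y - c * g y) := hf.sub (contDiff_const.mul hg)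
  have hDf : ∀ v : ℝ × ℝ, Differentiable ℝ (Dv v f) := fun v =>
    (Dv_contDiff v (show ContDiff ℝ ((1:ℕ∞)+1) f from by exact hf)).differentiable (by norm_num)
  have hDg : ∀ v : ℝ × ℝ, Differentiable ℝ (Dv v g) := fun v =>
    (Dv_contDiff v (show ContDiff ℝ ((1:ℕ∞)+1) g from by exact hg)).differentiable (by norm_num)
  rw [lap_eq_Dv hcomb, lap_eq_Dv hf, lap_eq_Dv hg]
  have e1 : Dv (1,0) (fun y => f y - c * g y) = fun y => Dv (1,0) f y - c * Dv (1,0) g y :=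
    funext fun y => Dv_sub_mul hfd hgd _ c y
  have e2 : Dv (0,1) (fun y => f y - c * g y) = fun y => Dv (0,1) f y - c * Dv (0,1) g y :=
    funext fun y => Dv_sub_mul hfd hgd _ c y
  rw [e1, e2, Dv_sub_mul (hDf _) (hDg _), Dv_sub_mul (hDf _) (hDg _)]
  ring

lemma lap_comp_scale {g : ℝ × ℝ → ℝ} (hg : ContDiff ℝ 2 g) (c : ℝ) (p₀ x : ℝ × ℝ) :
    lap (fun y => g (c • (y - p₀))) x = c ^ 2 * lap g (c • (x - p₀)) := by
  have hgd : Differentiable ℝ g := hg.differentiable (by norm_num)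
  have hA : ContDiff ℝ 2 (fun y : ℝ × ℝ => c • (y - p₀)) :=
    (contDiff_id.sub contDiff_const).const_smul c
  have hcomp : ContDiff ℝ 2 (fun y => g (c • (y - p₀))) := hg.comp hA
  have hDg : ∀ v : ℝ × ℝ, Differentiable ℝ (Dv v g) := fun v =>
    (Dv_contDiff v (show ContDiff ℝ ((1:ℕ∞)+1) g from by exact hg)).differentiable (by norm_num)
  have hDgA : ∀ v : ℝ × ℝ, Differentiable ℝ (fun y => Dv v g (c • (y - p₀))) := fun v =>
    (hDg v).comp ((differentiable_id.sub (differentiable_const p₀)).const_smul c)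
  rw [lap_eq_Dv hcomp, lap_eq_Dv hg]
  have e1 : Dv (1,0) (fun y => g (c • (y - p₀))) = fun y => c * Dv (1,0) g (c • (y - p₀)) :=
    funext fun y => Dv_comp_scale hgd _ c p₀ y
  have e2 : Dv (0,1) (fun y => g (c • (y - p₀))) = fun y => c * Dv (0,1) g (c • (y - p₀)) :=
    funext fun y => Dv_comp_scale hgd _ c p₀ y
  rw [e1, e2, Dv_const_mul (hDgA _), Dv_const_mul (hDgA _),
    Dv_comp_scale (hDg _), Dv_comp_scale (hDg _)]
  ring

/-! ### Second derivative test -/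

open Filter Topology in
lemma second_deriv_nonneg_of_isLocalMin {f : ℝ → ℝ} (hf : ContDiff ℝ 2 f)
    {a : ℝ} (h : IsLocalMin f a) : 0 ≤ deriv (deriv f) a := by
  by_contra hneg
  push_neg at hneg
  have hf1 : ContDiff ℝ 1 (deriv f) :=
    (contDiff_succ_iff_deriv.mp (show ContDiff ℝ (1 + 1) f from by exact_mod_cast hf)).2.2
  have hd0 : deriv f a = 0 := h.deriv_eq_zero
  have hder : HasDerivAt (deriv f) (deriv (deriv f) a) a :=
    ((hf1.differentiable (by norm_num)) a).hasDerivAt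
  have hslope : Tendsto (slope (deriv f) a) (𝓝[≠] a) (𝓝 (deriv (deriv f) a)) :=
    hasDerivAt_iff_tendsto_slope.mp hder
  have hev : ∀ᶠ x in 𝓝[≠] a, slope (deriv f) a x < 0 := hslope.eventually_lt_const hneg
  have hmono : 𝓝[>] a ≤ 𝓝[≠] a := nhdsWithin_mono a (fun x hx => ne_of_gt hx)
  have hev' : ∀ᶠ x in 𝓝[>] a, slope (deriv f) a x < 0 := hev.filter_mono hmono
  have hev2 : ∀ᶠ x in 𝓝[>] a, f a ≤ f x := h.filter_mono nhdsWithin_le_nhds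
  obtain ⟨c, hc, hsub⟩ := mem_nhdsGT_iff_exists_Ioo_subset.mp (hev'.and hev2)
  have hac : a < c := hc
  have hderneg : ∀ x ∈ Ioo a c, deriv f x < 0 := by
    intro x hx
    have hs := (hsub hx).1
    rw [slope_def_field, hd0, sub_zero] at hs
    rcases div_neg_iff.mp hs with ⟨_, h2⟩ | ⟨h1, _⟩
    · linarith [hx.1]
    · exact h1
  set m := (a + c) / 2 with hm
  have ham : a < m := by simp only [hm]; linarith
  have hmc : m < c := by simp only [hm]; linarith
  have hanti : StrictAntiOn f (Icc a m) := by
    apply strictAntiOn_of_deriv_neg (convex_Icc a m) (hf.continuous.continuousOn)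
    intro x hx
    rw [interior_Icc] at hx
    exact hderneg x ⟨hx.1, hx.2.trans hmc⟩
  have h1 : f m < f a := hanti ⟨le_refl a, ham.le⟩ ⟨ham.le, le_refl m⟩ ham
  have h2 : f a ≤ f m := (hsub ⟨ham, hmc⟩).2
  linarith

open Filter Topology in
lemma lap_nonneg_of_isLocalMin {w : ℝ × ℝ → ℝ} (hw : ContDiff ℝ 2 w) {q : ℝ × ℝ}
    (h : IsLocalMin w q) : 0 ≤ lap w q := by
  have hx : ContDiff ℝ 2 (fun t : ℝ => w (t, q.2)) :=
    hw.comp (contDiff_id.prodMk contDiff_const)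
  have hy : ContDiff ℝ 2 (fun t : ℝ => w (q.1, t)) :=
    hw.comp (contDiff_const.prodMk contDiff_id)
  have htx : Tendsto (fun t : ℝ => ((t, q.2) : ℝ × ℝ)) (𝓝 q.1) (𝓝 q) := by
    have : Continuous (fun t : ℝ => ((t, q.2) : ℝ × ℝ)) := continuous_id.prodMk continuous_const
    simpa using this.tendsto q.1
  have hty : Tendsto (fun t : ℝ => ((q.1, t) : ℝ × ℝ)) (𝓝 q.2) (𝓝 q) := by
    have : Continuous (fun t : ℝ => ((q.1, t) : ℝ × ℝ)) := continuous_const.prodMk continuous_id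
    simpa using this.tendsto q.2
  have hminx : IsLocalMin (fun t : ℝ => w (t, q.2)) q.1 := by
    have := htx.eventually h
    simpa [IsLocalMin, IsMinFilter] using this
  have hminy : IsLocalMin (fun t : ℝ => w (q.1, t)) q.2 := by
    have := hty.eventually h
    simpa [IsLocalMin, IsMinFilter] using this
  have e1 : pdx (pdx w) q = deriv (deriv (fun t : ℝ => w (t, q.2))) q.1 := rfl
  have e2 : pdy (pdy w) q = deriv (deriv (fun t : ℝ => w (q.1, t))) q.2 := rfl
  have n1 := second_deriv_nonneg_of_isLocalMin hx hminx
  have n2 := second_deriv_nonneg_of_isLocalMin hy hminy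
  rw [lap, e1, e2]
  linarith

/-! ### `dist2` facts -/

noncomputable def e2 (p : ℝ × ℝ) : EuclideanSpace ℝ (Fin 2) :=
  (WithLp.equiv 2 (Fin 2 → ℝ)).symm ![p.1, p.2]

lemma dist2_eq_dist (p q : ℝ × ℝ) : dist2 p q = dist (e2 p) (e2 q) := by
  rw [EuclideanSpace.dist_eq]
  simp [dist2, e2, Fin.sum_univ_two, Real.dist_eq, sq_abs]

lemma dist2_nonneg (p q : ℝ × ℝ) : 0 ≤ dist2 p q := Real.sqrt_nonneg _

lemma dist2_triangle (p q r : ℝ × ℝ) : dist2 p r ≤ dist2 p q + dist2 q r := by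
  rw [dist2_eq_dist, dist2_eq_dist, dist2_eq_dist]; exact dist_triangle _ _ _

lemma dist2_self (p : ℝ × ℝ) : dist2 p p = 0 := by simp [dist2]

lemma continuous_dist2 (p : ℝ × ℝ) : Continuous (fun q => dist2 q p) :=
  Real.continuous_sqrt.comp
    (((continuous_fst.sub continuous_const).pow 2).add
      ((continuous_snd.sub continuous_const).pow 2))

lemma dist2_scale (c : ℝ) (hc : 0 ≤ c) (q p : ℝ × ℝ) :
    dist2 (c • (q - p)) (0, 0) = c * dist2 q p := by
  simp only [dist2, Prod.smul_fst, Prod.smul_snd, Prod.fst_sub, Prod.snd_sub, smul_eq_mul]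
  rw [show (c * (q.1 - p.1) - 0) ^ 2 + (c * (q.2 - p.2) - 0) ^ 2
      = c ^ 2 * ((q.1 - p.1) ^ 2 + (q.2 - p.2) ^ 2) by ring,
    Real.sqrt_mul (sq_nonneg c), Real.sqrt_sq hc]

lemma abs_fst_le_dist2 (p q : ℝ × ℝ) : |p.1 - q.1| ≤ dist2 p q := by
  rw [dist2, ← Real.sqrt_sq_eq_abs]
  exact Real.sqrt_le_sqrt (by nlinarith [sq_nonneg (p.2 - q.2)])

lemma abs_snd_le_dist2 (p q : ℝ × ℝ) : |p.2 - q.2| ≤ dist2 p q := by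
  rw [dist2, ← Real.sqrt_sq_eq_abs]
  exact Real.sqrt_le_sqrt (by nlinarith [sq_nonneg (p.1 - q.1)])

lemma isCompact_dist2_ball (p : ℝ × ℝ) (r : ℝ) : IsCompact {q : ℝ × ℝ | dist2 q p ≤ r} := by
  apply Metric.isCompact_of_isClosed_isBounded
  · exact isClosed_le (continuous_dist2 p) continuous_const
  · apply (Metric.isBounded_closedBall (x := p) (r := r)).subset
    intro q hq
    simp only [Metric.mem_closedBall]
    rw [Prod.dist_eq]
    simp only [Real.dist_eq, sup_le_iff]
    exact ⟨(abs_fst_le_dist2 q p).trans hq, (abs_snd_le_dist2 q p).trans hq⟩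

/-! ### Main theorem -/

set_option maxHeartbeats 1000000 in
/-- Sliding comparison with the scaled first Dirichlet eigenfunction:
if `F'(s) R² ≤ -μ₁ s` on `[0, 1-δ]` and `0 < u < 1` solves `Δu = F'(u)` on `B(x̄,2R)`,
then `u ≥ 1 - δ` on `B(x̄,R)`. -/
theorem lower_bound_via_eigenfunction
    (F : ℝ → ℝ) (hF : ContDiff ℝ (⊤ : ℕ∞) F)
    (μ₁ : ℝ) (hμ₁ : 0 < μ₁)
    (φ₁ : ℝ × ℝ → ℝ) (hφ₁C : ContDiff ℝ 2 φ₁)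
    (hφ₁eig : ∀ p : ℝ × ℝ, dist2 p (0, 0) < 1 → -lap φ₁ p = μ₁ * φ₁ p)
    (hφ₁pos : ∀ p : ℝ × ℝ, dist2 p (0, 0) < 1 → 0 < φ₁ p)
    (hφ₁bd : ∀ p : ℝ × ℝ, dist2 p (0, 0) = 1 → φ₁ p = 0)
    (hφ₁sup : ∀ p : ℝ × ℝ, φ₁ p ≤ 1) (hφ₁max : φ₁ (0, 0) = 1)
    (δ : ℝ) (hδ : 0 < δ) (hδ1 : δ < 1)
    (R : ℝ) (hR : 0 < R)
    (hFR : ∀ s ∈ Icc (0:ℝ) (1 - δ), deriv F s * R ^ 2 ≤ -μ₁ * s)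
    (xb : ℝ × ℝ)
    (u : ℝ × ℝ → ℝ) (hu : ContDiff ℝ 2 u)
    (hsol : ∀ p : ℝ × ℝ, dist2 p xb < 2 * R → lap u p = deriv F (u p))
    (hu01 : ∀ p : ℝ × ℝ, dist2 p xb < 2 * R → 0 < u p ∧ u p < 1) :
    ∀ p : ℝ × ℝ, dist2 p xb < R → 1 - δ ≤ u p := by
  intro p hp
  by_contra hcon
  push_neg at hcon
  set d := dist2 p xb with hd
  have hd0 : 0 ≤ d := dist2_nonneg _ _
  set R' : ℝ := (3 * R - d) / 2 with hR'def
  have hRR' : R < R' := by rw [hR'def]; linarith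
  have hR'pos : 0 < R' := hR.trans hRR'
  set c : ℝ := 1 / R' with hcdef
  have hc : 0 < c := by positivity
  have hcR' : c * R' = 1 := by rw [hcdef, one_div, inv_mul_cancel₀ hR'pos.ne']
  set φ : ℝ × ℝ → ℝ := fun y => φ₁ (c • (y - p)) with hφdef
  have hφC : ContDiff ℝ 2 φ := hφ₁C.comp ((contDiff_id.sub contDiff_const).const_smul c)
  set K := {q : ℝ × ℝ | dist2 q p ≤ R'} with hKdef
  have hKcomp : IsCompact K := isCompact_dist2_ball p R'
  have hpK : p ∈ K := by simp only [hKdef, mem_setOf_eq, dist2_self]; linarith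
  have hKne : K.Nonempty := ⟨p, hpK⟩
  have hKsub : ∀ q ∈ K, dist2 q xb < 2 * R := by
    intro q hq
    have := dist2_triangle q p xb
    have hq' : dist2 q p ≤ R' := hq
    rw [hR'def] at hq'
    linarith [this]
  have hupos : ∀ q ∈ K, 0 < u q := fun q hq => (hu01 q (hKsub q hq)).1
  have hscale : ∀ q : ℝ × ℝ, dist2 (c • (q - p)) (0, 0) = c * dist2 q p :=
    fun q => dist2_scale c hc.le q p
  have hφ_nonneg : ∀ q ∈ K, 0 ≤ φ q := by
    intro q hq
    have h1 : dist2 (c • (q - p)) (0, 0) ≤ 1 := by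
      rw [hscale q, ← hcR']
      exact mul_le_mul_of_nonneg_left hq hc.le
    rcases lt_or_eq_of_le h1 with h | h
    · exact (hφ₁pos _ h).le
    · show (0:ℝ) ≤ φ₁ (c • (q - p))
      rw [hφ₁bd _ h]
  have hφ_le_one : ∀ q : ℝ × ℝ, φ q ≤ 1 := fun q => hφ₁sup _
  have hφp : φ p = 1 := by
    simp only [hφdef, sub_self, smul_zero]
    exact hφ₁max
  set T := {ε : ℝ | 0 ≤ ε ∧ ε ≤ 1 - δ ∧ ∀ q ∈ K, ε * φ q ≤ u q} with hTdef
  have hT0 : (0 : ℝ) ∈ T := ⟨le_rfl, by linarith, fun q hq => by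
    simpa using (hupos q hq).le⟩
  have hTne : T.Nonempty := ⟨0, hT0⟩
  have hTbdd : BddAbove T := ⟨1 - δ, fun ε hε => hε.2.1⟩
  set ε₀ := sSup T with hε₀def
  have hε₀_ub : ∀ ε ∈ T, ε ≤ ε₀ := fun ε hε => le_csSup hTbdd hε
  have hε₀0 : 0 ≤ ε₀ := hε₀_ub 0 hT0
  have hε₀le : ε₀ ≤ 1 - δ := csSup_le hTne (fun ε hε => hε.2.1)
  have hε₀T : ∀ q ∈ K, ε₀ * φ q ≤ u q := by
    intro q hq
    rcases (hφ_nonneg q hq).eq_or_lt with h0 | hpos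
    · rw [← h0, mul_zero]; exact (hupos q hq).le
    · have hub : ε₀ ≤ u q / φ q :=
        csSup_le hTne (fun ε hε => (le_div_iff₀ hpos).mpr (hε.2.2 q hq))
      exact (le_div_iff₀ hpos).mp hub
  have hε₀lt : ε₀ < 1 - δ := by
    have := hε₀T p hpK
    rw [hφp, mul_one] at this
    linarith
  have htouch : ∃ q ∈ K, u q = ε₀ * φ q := by
    by_contra hnt
    push_neg at hnt
    have hlt : ∀ q ∈ K, ε₀ * φ q < u q := fun q hq =>
      lt_of_le_of_ne (hε₀T q hq) (fun h => hnt q hq h.symm)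
    obtain ⟨q0, hq0K, hq0min⟩ := hKcomp.exists_isMinOn hKne
      ((hu.continuous.sub (continuous_const.mul hφC.continuous)).continuousOn)
    set cm := u q0 - ε₀ * φ q0 with hcm
    have hcmpos : 0 < cm := sub_pos.mpr (hlt q0 hq0K)
    set η := min cm (1 - δ - ε₀) with hη
    have hηpos : 0 < η := lt_min hcmpos (by linarith)
    have hmem : ε₀ + η ∈ T := by
      refine ⟨by linarith, by have := min_le_right cm (1 - δ - ε₀); rw [hη]; linarith, ?_⟩
      intro q hq
      have h1 : cm ≤ u q - ε₀ * φ q := hq0min hq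
      have h2 : η * φ q ≤ η := by
        nlinarith [hφ_le_one q, hφ_nonneg q hq, hηpos.le]
      have h3 : η ≤ cm := min_le_left _ _
      nlinarith
    have := hε₀_ub _ hmem
    linarith
  obtain ⟨q, hqK, hqt⟩ := htouch
  have hq2R : dist2 q xb < 2 * R := hKsub q hqK
  have huq : 0 < u q := (hu01 q hq2R).1
  have hφq0 : 0 ≤ φ q := hφ_nonneg q hqK
  have hφqpos : 0 < φ q := by
    rcases hφq0.eq_or_lt with h | h
    · exfalso; rw [hqt, ← h, mul_zero] at huq; exact lt_irrefl 0 huq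
    · exact h
  have hε₀pos : 0 < ε₀ := by nlinarith
  have hqint : dist2 q p < R' := by
    rcases lt_or_eq_of_le (show dist2 q p ≤ R' from hqK) with h | h
    · exact h
    · exfalso
      have : dist2 (c • (q - p)) (0, 0) = 1 := by rw [hscale q, h, hcR']
      have := hφ₁bd _ this
      rw [hφdef] at hφqpos
      simp only at hφqpos
      linarith [this, hφqpos]
  set w : ℝ × ℝ → ℝ := fun x => u x - ε₀ * φ x with hwdef
  have hwC : ContDiff ℝ 2 w := hu.sub (contDiff_const.mul hφC)
  have hwmin : IsLocalMin w q := by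
    have hopen : IsOpen {x : ℝ × ℝ | dist2 x p < R'} :=
      isOpen_lt (continuous_dist2 p) continuous_const
    have hev : ∀ᶠ x in nhds q, x ∈ K :=
      Filter.mem_of_superset (hopen.mem_nhds hqint)
        (fun x hx => show dist2 x p ≤ R' from le_of_lt hx)
    refine hev.mono (fun x hx => ?_)
    have h1 : w q = 0 := by rw [hwdef]; simp only; linarith [hqt]
    have h2 : 0 ≤ w x := by rw [hwdef]; simp only; linarith [hε₀T x hx]
    rw [h1]; exact h2
  have hlapw : 0 ≤ lap w q := lap_nonneg_of_isLocalMin hwC hwmin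
  have hlapsub : lap w q = lap u q - ε₀ * lap φ q := lap_sub_mul hu hφC ε₀ q
  have hlapφ : lap φ q = c ^ 2 * lap φ₁ (c • (q - p)) := lap_comp_scale hφ₁C c p q
  have heig : -lap φ₁ (c • (q - p)) = μ₁ * φ₁ (c • (q - p)) := by
    apply hφ₁eig
    rw [hscale q, ← hcR']
    exact (mul_lt_mul_iff_right₀ hc).mpr hqint
  have hφeq : φ₁ (c • (q - p)) = φ q := rfl
  have hlapu : lap u q = deriv F (u q) := hsol q hq2R
  have huqmem : u q ∈ Icc (0:ℝ) (1 - δ) := by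
    constructor
    · exact huq.le
    · rw [hqt]; nlinarith [hφ_le_one q]
  have hFRq : deriv F (u q) * R ^ 2 ≤ -μ₁ * u q := hFR (u q) huqmem
  have hcR : c * R < 1 := by
    rw [← hcR']
    exact (mul_lt_mul_iff_right₀ hc).mpr hRR'
  -- combine everything into a contradiction
  have hlapφ' : lap φ q = -(c ^ 2 * (μ₁ * φ q)) := by
    rw [hφeq] at heig
    have h9 : lap φ₁ (c • (q - p)) = -(μ₁ * φ q) := by linarith
    rw [hlapφ, h9]; ring
  have key : 0 ≤ deriv F (u q) + ε₀ * (c ^ 2 * (μ₁ * φ q)) := by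
    have := hlapw
    rw [hlapsub, hlapu, hlapφ'] at this
    linarith
  have key2 : deriv F (u q) * R ^ 2 ≤ -μ₁ * (ε₀ * φ q) := by rw [← hqt]; exact hFRq
  have hs : 0 < ε₀ * φ q := mul_pos hε₀pos hφqpos
  have hcRpos : 0 < c * R := mul_pos hc hR
  have ht : (c * R) ^ 2 < 1 := pow_lt_one₀ hcRpos.le hcR (by norm_num)
  have h5 : 0 ≤ deriv F (u q) * R ^ 2 + μ₁ * (ε₀ * φ q) * ((c * R) ^ 2) := by
    have h5' := mul_nonneg key (sq_nonneg R)
    have e : (deriv F (u q) + ε₀ * (c ^ 2 * (μ₁ * φ q))) * R ^ 2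
        = deriv F (u q) * R ^ 2 + μ₁ * (ε₀ * φ q) * ((c * R) ^ 2) := by ring
    rw [e] at h5'
    exact h5'
  have h6 : μ₁ * (ε₀ * φ q) * ((c * R) ^ 2 - 1) < 0 :=
    mul_neg_of_pos_of_neg (mul_pos hμ₁ hs) (by linarith)
  nlinarith [h5, key2, h6]
end
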